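/- arXiv:2412.14709 — 11 statements merged into one kernel-verified Lean document; each statement's English description precedes it below -/
import Mathlib

section
/- Let g(x,y) = x(x+2y) over ℤ₂. The set of values g(x,y) where (x,y) ranges over primitive pairs in ℤ₂² (i.e., at least one of x,y is a unit) equals ℤ₂^× ∪ 8ℤ₂. -/
lemma Z2_not_isUnit_iff (z : ℤ_[2]) : ¬ IsUnit z ↔ (2 : ℤ_[2]) ∣ z := by
  rw [← Ideal.mem_span_singleton]
  have := PadicInt.maximalIdeal_eq_span_p (p := 2)
  push_cast at this
  rw [← this, IsLocalRing.mem_maximalIdeal, mem_nonunits_iff]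

lemma Z2_units_sum (u v : ℤ_[2]) (hu : IsUnit u) (hv : IsUnit v) :
    (2 : ℤ_[2]) ∣ u + v := by
  have key : ∀ w : ℤ_[2], IsUnit w → PadicInt.toZMod w = 1 := by
    intro w hw
    have h0 : PadicInt.toZMod w ≠ 0 := by
      intro h
      have : w ∈ RingHom.ker (PadicInt.toZMod : ℤ_[2] →+* ZMod 2) := h
      rw [PadicInt.ker_toZMod, IsLocalRing.mem_maximalIdeal, mem_nonunits_iff] at this
      exact this hw
    have h1 : ∀ a : ZMod 2, a ≠ 0 → a = 1 := by decide
    exact h1 _ h0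
  have : PadicInt.toZMod (u + v) = 0 := by
    rw [map_add, key u hu, key v hv]; decide
  have : u + v ∈ RingHom.ker (PadicInt.toZMod : ℤ_[2] →+* ZMod 2) := this
  rw [PadicInt.ker_toZMod, PadicInt.maximalIdeal_eq_span_p, Ideal.mem_span_singleton] at this
  exact_mod_cast this

/-- The set of primitive values of `g(x,y) = x(x+2y)` over `ℤ₂` equals `ℤ₂ˣ ∪ 8ℤ₂`. -/
theorem primitive_values_of_g_over_Z2 :
    {α : ℤ_[2] | ∃ x y : ℤ_[2], (IsUnit x ∨ IsUnit y) ∧ x * (x + 2 * y) = α} =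
      {α : ℤ_[2] | IsUnit α} ∪ {α : ℤ_[2] | ∃ β : ℤ_[2], α = 8 * β} := by
  ext α
  simp only [Set.mem_setOf_eq, Set.mem_union]
  constructor
  · rintro ⟨x, y, hxy, rfl⟩
    by_cases hx : IsUnit x
    · left
      have h2y : ¬ IsUnit (2 * y) := by
        rw [Z2_not_isUnit_iff]; exact ⟨y, rfl⟩
      have : IsUnit (x + 2 * y) := by
        by_contra h
        rw [Z2_not_isUnit_iff] at h h2y
        have : (2 : ℤ_[2]) ∣ x := (dvd_add_right h2y).mp (by simpa [add_comm] using h)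
        exact (Z2_not_isUnit_iff x).mpr this hx
      exact hx.mul this
    · right
      have hy : IsUnit y := hxy.resolve_left hx
      obtain ⟨t, rfl⟩ := (Z2_not_isUnit_iff x).mp hx
      have h8 : (8 : ℤ_[2]) ∣ 2 * t * (2 * t + 2 * y) := by
        by_cases ht : IsUnit t
        · obtain ⟨s, hs⟩ := Z2_units_sum t y ht hy
          exact ⟨t * s, by rw [show (2:ℤ_[2])*t+2*y = 2*(t+y) by ring, hs]; ring⟩
        · obtain ⟨s, hs⟩ := (Z2_not_isUnit_iff t).mp ht
          exact ⟨s * (t + y), by rw [hs]; ring⟩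
      obtain ⟨β, hβ⟩ := h8
      exact ⟨β, by rw [← hβ]⟩
  · rintro (hα | ⟨β, rfl⟩)
    · have h2 : (2 : ℤ_[2]) ∣ 1 - α := by
        obtain ⟨s, hs⟩ := Z2_units_sum α (-1) hα (by simp)
        exact ⟨-s, by linear_combination -hs⟩
      obtain ⟨y, hy⟩ := h2
      exact ⟨α, y, Or.inl hα, by rw [show α + 2*y = 1 by linear_combination -hy]; ring⟩
    · refine ⟨2, 2 * β - 1, Or.inr ?_, by ring⟩
      by_contra h
      rw [Z2_not_isUnit_iff] at h
      obtain ⟨s, hs⟩ := h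
      have hd : (2 : ℤ_[2]) ∣ 1 := ⟨β - s, by linear_combination -hs⟩
      have h2 : ¬ IsUnit (2 : ℤ_[2]) := (Z2_not_isUnit_iff 2).mpr ⟨1, by ring⟩
      exact h2 (isUnit_of_dvd_one hd)
end

section
/- No integer α ∈ ℤ₂ with α ≡ 4 (mod 8) is primitively represented by the quadratic form 2x² + 2xy + 2y² + z² − w² over ℤ₂. That is, if 2x² + 2xy + 2y² + z² − w² = α with (x,y,z,w) ∈ ℤ₂⁴ primitive (some coordinate a unit), then α ≢ 4 (mod 8). -/
lemma zmod8_key : ∀ X Y Z W : ZMod (2^3),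
    ((∃ b, X * b = 1) ∨ (∃ b, Y * b = 1) ∨ (∃ b, Z * b = 1) ∨ (∃ b, W * b = 1)) →
    2 * X ^ 2 + 2 * X * Y + 2 * Y ^ 2 + Z ^ 2 - W ^ 2 ≠ 4 := by decide

/-- No `α ≡ 4 (mod 8)` is primitively represented by `2x² + 2xy + 2y² + z² - w²` over `ℤ₂`. -/
theorem no_four_mod_eight_primitively_represented
    (α x y z w : ℤ_[2])
    (hprim : IsUnit x ∨ IsUnit y ∨ IsUnit z ∨ IsUnit w)
    (h : 2 * x ^ 2 + 2 * x * y + 2 * y ^ 2 + z ^ 2 - w ^ 2 = α) :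
    ¬ (8 : ℤ_[2]) ∣ (α - 4) := by
  intro hdvd
  set φ : ℤ_[2] →+* ZMod (2^3) := PadicInt.toZModPow 3 with hφ
  have hα : φ α = 4 := by
    obtain ⟨c, hc⟩ := hdvd
    have h8 : (φ (8 : ℤ_[2])) = 0 := by
      have : ((8 : ℤ_[2])) = ((8 : ℕ) : ℤ_[2]) := by norm_num
      rw [this, map_natCast]
      decide
    have := congrArg φ hc
    rw [map_sub, map_mul, h8, zero_mul] at this
    have h4 : φ (4 : ℤ_[2]) = 4 := by
      have : ((4 : ℤ_[2])) = ((4 : ℕ) : ℤ_[2]) := by norm_num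
      rw [this, map_natCast]; rfl
    rw [h4] at this
    linear_combination this
  have heq : 2 * (φ x) ^ 2 + 2 * (φ x) * (φ y) + 2 * (φ y) ^ 2 + (φ z) ^ 2 - (φ w) ^ 2 = 4 := by
    have := congrArg φ h
    have h2 : φ (2 : ℤ_[2]) = 2 := by
      have : ((2 : ℤ_[2])) = ((2 : ℕ) : ℤ_[2]) := by norm_num
      rw [this, map_natCast]; rfl
    rw [map_sub, map_add, map_add, map_add, map_mul, map_mul, map_mul, map_mul, map_pow,
      map_pow, map_pow, map_pow, h2, hα] at this
    exact this
  exact zmod8_key (φ x) (φ y) (φ z) (φ w)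
    (hprim.imp (fun h' => ((h'.map φ).exists_right_inv))
      (fun h' => h'.imp (fun h'' => (h''.map φ).exists_right_inv)
        (fun h'' => h''.imp (fun h3 => (h3.map φ).exists_right_inv)
          (fun h3 => (h3.map φ).exists_right_inv))))
    heq
end

section
/- Let p be an odd prime. For any symmetric matrix G ∈ M_n(ℤ_p) (n ≥ 1), there exists a matrix T ∈ M_{2n,n}(ℤ_p) extendable to an element of GL_{2n}(ℤ_p) such that TᵗHT = G, where H is the Gram matrix of the orthogonal sum of n hyperbolic planes ℍⁿ. In other words, ℍⁿ is primitively n-universal over ℤ_p. -/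
open Matrix

/-- `G` is primitively represented by `H`: there is an isometric embedding of the quadratic
lattice with Gram matrix `G` onto a direct summand of the lattice with Gram matrix `H`, i.e.
a matrix `T` with `Tᵀ H T = G` whose columns span a direct summand of `Rᵐ` (equivalently, over a
local ring, `T` can be completed to an invertible square matrix). -/
def PrimRep {R : Type*} [CommRing R] {ι κ : Type*} [Fintype ι] [Fintype κ] [DecidableEq κ]
    (G : Matrix κ κ R) (H : Matrix ι ι R) : Prop :=
  ∃ T : Matrix ι κ R, Tᵀ * H * T = G ∧ ∃ P : Matrix κ ι R, P * T = 1

/-- The Gram matrix of the orthogonal sum of `n` hyperbolic planes `ℍⁿ`. -/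
def HypN (R : Type*) [CommRing R] (n : ℕ) :
    Matrix (Fin n × Fin 2) (Fin n × Fin 2) R := fun p q =>
  if p.1 = q.1 ∧ p.2 ≠ q.2 then 1 else 0

/-!
Writing `ℍⁿ = Rⁿ ⊕ Rⁿ` with the two summands totally isotropic and in duality, the graph
`x ↦ (x, A x)` of any `A` embeds `Rⁿ` onto a direct summand, with Gram matrix `A + Aᵀ`.
When `2` is invertible, a symmetric `G` is `A + Aᵀ` for `A = G / 2`.
-/

namespace HypN

variable {R : Type*} [CommRing R] {n : ℕ}

/-- The embedding `x ↦ (x, A x)` of `Rⁿ` into `ℍⁿ`, the coordinate `(i, 0)` (resp. `(i, 1)`)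
being the `i`-th coordinate of the first (resp. second) isotropic summand. -/
def graph (A : Matrix (Fin n) (Fin n) R) : Matrix (Fin n × Fin 2) (Fin n) R :=
  of fun q j => if q.2 = 0 then (1 : Matrix (Fin n) (Fin n) R) q.1 j else A q.1 j

variable (R n) in
def fstProj : Matrix (Fin n) (Fin n × Fin 2) R :=
  of fun j q => if q.2 = 0 then (1 : Matrix (Fin n) (Fin n) R) j q.1 else 0

theorem graph_transpose_mul_mul_graph (A : Matrix (Fin n) (Fin n) R) :
    (graph A)ᵀ * HypN R n * graph A = A + Aᵀ := by
  ext j j'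
  simp [graph, HypN, mul_apply, Fintype.sum_prod_type, Fin.sum_univ_two, one_apply,
    Finset.sum_add_distrib, add_comm]

theorem fstProj_mul_graph (A : Matrix (Fin n) (Fin n) R) : fstProj R n * graph A = 1 := by
  ext j j'
  simp [graph, fstProj, mul_apply, Fintype.sum_prod_type, Fin.sum_univ_two, one_apply]

theorem primRep_add_transpose (A : Matrix (Fin n) (Fin n) R) : PrimRep (A + Aᵀ) (HypN R n) :=
  ⟨graph A, graph_transpose_mul_mul_graph A, fstProj R n, fstProj_mul_graph A⟩

theorem primRep_of_isSymm [Invertible (2 : R)] {G : Matrix (Fin n) (Fin n) R} (hG : G.IsSymm) :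
    PrimRep G (HypN R n) := by
  have hG_half : (⅟2 : R) • G + ((⅟2 : R) • G)ᵀ = G := by
    rw [transpose_smul, hG.eq, invOf_two_smul_add_invOf_two_smul]
  simpa only [hG_half] using primRep_add_transpose ((⅟2 : R) • G)

end HypN

theorem PadicInt.isUnit_two {p : ℕ} [Fact p.Prime] (hp : p ≠ 2) : IsUnit (2 : ℤ_[p]) :=
  PadicInt.isUnit_iff.mpr <| by
    exact_mod_cast PadicInt.norm_natCast_eq_one_iff.mpr
      ((Nat.coprime_primes Fact.out Nat.prime_two).mpr hp)

theorem HypN_primitively_universal_odd_general (p : ℕ) [Fact p.Prime] (hp : p ≠ 2)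
    (n : ℕ) (G : Matrix (Fin n) (Fin n) ℤ_[p])
    (hG : G.IsSymm) :
    PrimRep G (HypN ℤ_[p] n) :=
  have := (PadicInt.isUnit_two hp).invertible
  HypN.primRep_of_isSymm hG

/-- For any odd prime `p`, `ℍⁿ` is primitively `n`-universal over `ℤ_p`. -/
theorem HypN_primitively_universal_odd (p : ℕ) [Fact p.Prime] (hp : p ≠ 2)
    (n : ℕ) (hn : 1 ≤ n) (G : Matrix (Fin n) (Fin n) ℤ_[p])
    (hG : G.IsSymm) (hdet : G.det ≠ 0) :
    PrimRep G (HypN ℤ_[p] n) :=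
  HypN_primitively_universal_odd_general p hp n G hG
end

section
/- Over any local ring R of a non-archimedean local field (characteristic of the field not 2), if the R-lattice J primitively represents a lattice K of rank k, then for every α ∈ 2R the lattice ℍ ⊥ J primitively represents ⟨α⟩ ⊥ K. -/
open Matrix

/-! The vector `e + β f` of `ℍ` has norm `2β` and splits off, and primitive representations
add up along orthogonal sums. -/

section

variable {R : Type*} [CommRing R]

theorem PrimRep.fromBlocks {ι₁ ι₂ κ₁ κ₂ : Type*} [Fintype ι₁] [Fintype ι₂] [Fintype κ₁]
    [Fintype κ₂] [DecidableEq κ₁] [DecidableEq κ₂]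
    {G₁ : Matrix κ₁ κ₁ R} {G₂ : Matrix κ₂ κ₂ R} {H₁ : Matrix ι₁ ι₁ R} {H₂ : Matrix ι₂ ι₂ R}
    (h₁ : PrimRep G₁ H₁) (h₂ : PrimRep G₂ H₂) :
    PrimRep (Matrix.fromBlocks G₁ 0 0 G₂) (Matrix.fromBlocks H₁ 0 0 H₂) := by
  obtain ⟨T₁, hT₁, P₁, hP₁⟩ := h₁
  obtain ⟨T₂, hT₂, P₂, hP₂⟩ := h₂
  refine ⟨Matrix.fromBlocks T₁ 0 0 T₂, ?_, Matrix.fromBlocks P₁ 0 0 P₂, ?_⟩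
  · simp [Matrix.fromBlocks_transpose, Matrix.fromBlocks_multiply, hT₁, hT₂]
  · simp [Matrix.fromBlocks_multiply, hP₁, hP₂, Matrix.fromBlocks_one]

theorem primRep_two_mul_hyperbolic (β : R) :
    PrimRep (!![2 * β] : Matrix (Fin 1) (Fin 1) R) (!![0, 1; 1, 0] : Matrix (Fin 2) (Fin 2) R) := by
  refine ⟨!![1; β], ?_, !![1, 0], ?_⟩
  · ext i j
    fin_cases i; fin_cases j
    simp [Matrix.mul_apply, Fin.sum_univ_succ]
    ring
  · ext i j
    fin_cases i; fin_cases j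
    simp

end

theorem hyp_perp_represents_general
    (R : Type*) [CommRing R]
    {m k : ℕ} (J : Matrix (Fin m) (Fin m) R) (K : Matrix (Fin k) (Fin k) R)
    (hrep : PrimRep K J) (α : R) (hα : ∃ β : R, α = 2 * β) :
    PrimRep (Matrix.fromBlocks (!![α] : Matrix (Fin 1) (Fin 1) R) 0 0 K)
      (Matrix.fromBlocks (!![0, 1; 1, 0] : Matrix (Fin 2) (Fin 2) R) 0 0 J) := by
  obtain ⟨β, rfl⟩ := hα
  exact (primRep_two_mul_hyperbolic β).fromBlocks hrep

/-- Over the ring of integers `R` of a non-archimedean local field of characteristic `≠ 2`: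
if `J` primitively represents `K`, then for every `α ∈ 2R` the lattice `ℍ ⊥ J` primitively
represents `⟨α⟩ ⊥ K`. -/
theorem hyp_perp_represents
    (R : Type*) [CommRing R] [IsDomain R] [IsDiscreteValuationRing R]
    [IsAdicComplete (IsLocalRing.maximalIdeal R) R]
    [Finite (IsLocalRing.ResidueField R)]
    (h2 : (2 : R) ≠ 0)
    {m k : ℕ} (J : Matrix (Fin m) (Fin m) R) (K : Matrix (Fin k) (Fin k) R)
    (hJ : J.IsSymm) (hK : K.IsSymm) (hJd : J.det ≠ 0) (hKd : K.det ≠ 0)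
    (hrep : PrimRep K J) (α : R) (hα : ∃ β : R, α = 2 * β) :
    PrimRep (Matrix.fromBlocks (!![α] : Matrix (Fin 1) (Fin 1) R) 0 0 K)
      (Matrix.fromBlocks (!![0, 1; 1, 0] : Matrix (Fin 2) (Fin 2) R) 0 0 J) :=
  hyp_perp_represents_general R J K hrep α hα
end

section
/- Let R be an unramified dyadic local ring. For every n ≥ 1, the lattice ℍⁿ (orthogonal sum of n hyperbolic planes) primitively represents every even R-lattice of rank n. -/
open Matrix

/-!
An even symmetric matrix splits as `G = A + Aᵀ` (take the strict upper triangle of `G` and half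
its diagonal). The graph `x ↦ (x, A x)` of `A` then embeds the lattice with Gram matrix `G`
into `ℍⁿ`, since `Q(x, A x) = 2 ⟨x, A x⟩ = xᵀ (A + Aᵀ) x`, and its image is a direct summand
complementary to `0 ⊕ Rⁿ`.
-/

theorem Matrix.exists_add_transpose_eq_of_even {R κ : Type*} [CommRing R] [LinearOrder κ]
    {G : Matrix κ κ R} (hG : G.IsSymm) (heven : ∀ i, ∃ β : R, G i i = 2 * β) :
    ∃ A : Matrix κ κ R, A + Aᵀ = G := by
  choose β hβ using heven
  refine ⟨of fun i j => if i < j then G i j else if i = j then β i else 0, ?_⟩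
  ext i j
  rcases lt_trichotomy i j with h | rfl | h
  · simp [h, h.ne', not_lt.mpr h.le]
  · simp [hβ, two_mul]
  · simp [h, not_lt.mpr h.le, h.ne', hG.apply i j]

section HypN

variable {R : Type*} [CommRing R] {n : ℕ} {κ : Type*}

theorem HypN_mul_apply_zero (M : Matrix (Fin n × Fin 2) κ R) (i : Fin n) (k : κ) :
    (HypN R n * M) (i, 0) k = M (i, 1) k := by
  simp [mul_apply, HypN, Fintype.sum_prod_type, Fin.sum_univ_two]

theorem HypN_mul_apply_one (M : Matrix (Fin n × Fin 2) κ R) (i : Fin n) (k : κ) :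
    (HypN R n * M) (i, 1) k = M (i, 0) k := by
  simp [mul_apply, HypN, Fintype.sum_prod_type, Fin.sum_univ_two]

/-- The matrix of `x ↦ (x, A x)` in the hyperbolic coordinates of `ℍⁿ`. -/
def graphMatrix (A : Matrix (Fin n) (Fin n) R) : Matrix (Fin n × Fin 2) (Fin n) R :=
  of fun p j => ![(1 : Matrix (Fin n) (Fin n) R) p.1 j, A p.1 j] p.2

theorem transpose_graphMatrix_mul_apply (A : Matrix (Fin n) (Fin n) R)
    (M : Matrix (Fin n × Fin 2) κ R) (j : Fin n) (k : κ) :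
    ((graphMatrix A)ᵀ * M) j k = M (j, 0) k + ∑ i, A i j * M (i, 1) k := by
  simp [graphMatrix, mul_apply, Fintype.sum_prod_type, Fin.sum_univ_two, Finset.sum_add_distrib,
    one_apply]

theorem transpose_graphMatrix_mul_HypN_mul_graphMatrix (A : Matrix (Fin n) (Fin n) R) :
    (graphMatrix A)ᵀ * HypN R n * graphMatrix A = A + Aᵀ := by
  ext j k
  rw [Matrix.mul_assoc, transpose_graphMatrix_mul_apply, HypN_mul_apply_zero]
  simp_rw [HypN_mul_apply_one]
  simp [graphMatrix, one_apply]

theorem transpose_graphMatrix_zero_mul_graphMatrix (A : Matrix (Fin n) (Fin n) R) :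
    (graphMatrix (0 : Matrix (Fin n) (Fin n) R))ᵀ * graphMatrix A = 1 := by
  ext j k
  rw [transpose_graphMatrix_mul_apply]
  simp [graphMatrix]

theorem primRep_HypN_add_transpose (A : Matrix (Fin n) (Fin n) R) :
    PrimRep (A + Aᵀ) (HypN R n) :=
  ⟨graphMatrix A, transpose_graphMatrix_mul_HypN_mul_graphMatrix A,
    (graphMatrix 0)ᵀ, transpose_graphMatrix_zero_mul_graphMatrix A⟩

end HypN

theorem HypN_primitively_represents_even_general
    (R : Type*) [CommRing R]
    (n : ℕ) (G : Matrix (Fin n) (Fin n) R)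
    (hG : G.IsSymm)
    (heven : ∀ i, ∃ β : R, G i i = 2 * β) :
    PrimRep G (HypN R n) := by
  obtain ⟨A, rfl⟩ := exists_add_transpose_eq_of_even hG heven
  exact primRep_HypN_add_transpose A

/-- Over an unramified dyadic local ring `R`, the lattice `ℍⁿ` primitively represents every
even `R`-lattice of rank `n`. -/
theorem HypN_primitively_represents_even
    (R : Type*) [CommRing R] [IsDomain R] [IsDiscreteValuationRing R]
    [IsAdicComplete (IsLocalRing.maximalIdeal R) R]
    [Finite (IsLocalRing.ResidueField R)]
    (h2 : Prime (2 : R))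
    (n : ℕ) (hn : 1 ≤ n) (G : Matrix (Fin n) (Fin n) R)
    (hG : G.IsSymm) (hdet : G.det ≠ 0)
    (heven : ∀ i, ∃ β : R, G i i = 2 * β) :
    PrimRep G (HypN R n) :=
  HypN_primitively_represents_even_general R n G hG heven
end

section
/- Let R be the ring of integers of a non-archimedean local field of residue characteristic ≠ 2 or unramified dyadic. If M is a primitively n-universal nondegenerate R-lattice, then the Witt index of the quadratic space FM is at least n; in particular the rank of M is at least 2n. -/
/-!
Let `T_k` primitively represent `π ^ k • 1`. As `R` is complete with finite residue field, the
`T_k` have an adic cluster point `L`: then `Lᵀ G L`, congruent to `π ^ k • 1` modulo arbitrarily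
high powers of `𝔪`, vanishes, and `L` stays primitive because having a left inverse is detected
modulo `𝔪`. Over the fraction field `L` spans an `n`-dimensional totally isotropic subspace of a
nondegenerate space, so `n + n ≤ m`.
-/

open Matrix

open IsLocalRing

section AdicLimit

variable {R : Type*} [CommRing R] (I : Ideal R) {ι κ : Type*}

theorem Matrix.eq_zero_of_forall_map_quotient_pow_eq_zero [IsHausdorff I R]
    {A : Matrix ι κ R} (h : ∀ j, A.map (Ideal.Quotient.mk (I ^ j)) = 0) : A = 0 := by
  ext a b
  rw [IsHausdorff.eq_iff_smodEq (I := I)]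
  intro j
  simpa using! congr($(h j) a b)

theorem IsAdicComplete.exists_matrix_clusterPt [IsAdicComplete I R]
    (hfin : ∀ j, Finite (R ⧸ I ^ j)) [Finite ι] [Finite κ] (x : ℕ → Matrix ι κ R) :
    ∃ L : Matrix ι κ R, ∃ s : ℕ → ℕ, (∀ j, j ≤ s j) ∧
      ∀ j, L.map (Ideal.Quotient.mk (I ^ j)) = (x (s j)).map (Ideal.Quotient.mk (I ^ j)) := by
  -- Along an ultrafilter each reduction modulo `I ^ j` is eventually constant (the quotient is
  -- finite); a diagonal choice of indices is then `I`-adically Cauchy.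
  let U : Ultrafilter ℕ := .of .atTop
  have hred : ∀ j, ∃ A : Matrix ι κ (R ⧸ I ^ j),
      ∀ᶠ k in U, (x k).map (Ideal.Quotient.mk (I ^ j)) = A := fun j =>
    have := hfin j
    Ultrafilter.eventually_exists_iff.mp (.of_forall fun k => ⟨_, rfl⟩)
  choose A hA using hred
  have hdiag : ∀ j, ∃ k, j ≤ k ∧ ∀ i ≤ j, (x k).map (Ideal.Quotient.mk (I ^ i)) = A i := fun j =>
    (((Filter.eventually_ge_atTop j).filter_mono (Ultrafilter.of_le _)).and
      ((Set.finite_Iic j).eventually_all.mpr fun i _ => hA i)).exists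
  choose s hs hsA using hdiag
  have hcauchy : ∀ a b {i j : ℕ}, i ≤ j →
      x (s i) a b ≡ x (s j) a b [SMOD (I ^ i • ⊤ : Submodule R R)] := fun a b i j hij => by
    simpa using! congr($((hsA i i le_rfl).trans (hsA j i hij).symm) a b)
  choose L hL using fun a b => IsPrecomplete.prec inferInstance (hcauchy a b)
  refine ⟨.of L, s, hs, fun j => ?_⟩
  ext a b
  simpa using! (hL a b j).symm

end AdicLimit

theorem Matrix.map_transpose_mul_mul {R S : Type*} [CommRing R] [CommRing S] (f : R →+* S)
    {ι κ : Type*} [Fintype ι] [Fintype κ] (G : Matrix ι ι R) (T : Matrix ι κ R) :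
    (Tᵀ * G * T).map f = (T.map f)ᵀ * G.map f * T.map f := by
  rw [Matrix.map_mul, Matrix.map_mul, Matrix.transpose_map]

theorem Matrix.exists_mul_eq_one_of_map_quotient_eq {R : Type*} [CommRing R] {I : Ideal R}
    (hI : I ≤ Ideal.jacobson ⊥) {ι κ : Type*} [Fintype ι] [Fintype κ] [DecidableEq κ]
    {S T : Matrix ι κ R} (hST : S.map (Ideal.Quotient.mk I) = T.map (Ideal.Quotient.mk I))
    {P : Matrix κ ι R} (hP : P * S = 1) : ∃ Q : Matrix κ ι R, Q * T = 1 := by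
  have hPT : (P * T).map (Ideal.Quotient.mk I) = 1 := by
    rw [Matrix.map_mul, ← hST, ← Matrix.map_mul, hP, Matrix.map_one _ (map_zero _) (map_one _)]
  have hdet : (P * T).det - 1 ∈ I := by
    rw [← Ideal.Quotient.eq, RingHom.map_det, RingHom.mapMatrix_apply, hPT, det_one, map_one]
  have hunit : IsUnit (P * T).det := Ideal.isUnit_of_sub_one_mem_jacobson_bot _ (hI hdet)
  exact ⟨(P * T)⁻¹ * P, by rw [Matrix.mul_assoc, Matrix.nonsing_inv_mul _ hunit]⟩

theorem Matrix.two_mul_card_le_of_transpose_mul_mul_eq_zero {K : Type*} [Field K]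
    {ι κ : Type*} [Fintype ι] [Fintype κ] [DecidableEq ι] [DecidableEq κ] {G : Matrix ι ι K}
    (hG : IsUnit G.det) {T : Matrix ι κ K} {P : Matrix κ ι K} (hP : P * T = 1)
    (hT : Tᵀ * G * T = 0) : 2 * Fintype.card κ ≤ Fintype.card ι := by
  have hsum := Matrix.rank_add_rank_le_card_of_mul_eq_zero hT
  have hrankGT : (Tᵀ * G).rank = T.rank := by
    rw [Matrix.rank_mul_eq_left_of_isUnit_det _ _ hG, Matrix.rank_transpose]
  have hrankT : Fintype.card κ ≤ T.rank := by
    simpa [hP] using Matrix.rank_mul_le_right P T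
  omega

theorem witt_index_of_primitively_universal_general
    (R : Type*) [CommRing R] [IsDomain R] [IsDiscreteValuationRing R]
    [IsAdicComplete (IsLocalRing.maximalIdeal R) R]
    [Finite (IsLocalRing.ResidueField R)]
    {m n : ℕ} (G : Matrix (Fin m) (Fin m) R)
    (hdet : G.det ≠ 0)
    (huniv : ∀ N : Matrix (Fin n) (Fin n) R, N.IsSymm → N.det ≠ 0 → PrimRep N G) :
    (∃ T : Matrix (Fin m) (Fin n) (FractionRing R),
        (∃ P : Matrix (Fin n) (Fin m) (FractionRing R), P * T = 1) ∧
          Tᵀ * G.map (algebraMap R (FractionRing R)) * T = 0) ∧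
      2 * n ≤ m := by
  obtain ⟨π, hπ⟩ := IsDiscreteValuationRing.exists_irreducible R
  choose T hT P hP using fun k : ℕ => huniv (π ^ k • 1)
    (by simp [IsSymm, transpose_smul]) (by simp [hπ.ne_zero])
  have : Finite (R ⧸ maximalIdeal R) := ‹Finite (ResidueField R)›
  obtain ⟨L, s, hs, hL⟩ := IsAdicComplete.exists_matrix_clusterPt (maximalIdeal R)
    (Ideal.finite_quotient_pow (IsNoetherian.noetherian _)) T
  have hiso : Lᵀ * G * L = 0 := by
    refine eq_zero_of_forall_map_quotient_pow_eq_zero (maximalIdeal R) fun j => ?_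
    have hπj : Ideal.Quotient.mk (maximalIdeal R ^ j) (π ^ s j) = 0 :=
      Ideal.Quotient.eq_zero_iff_mem.mpr <|
        Ideal.pow_le_pow_right (hs j) (Ideal.pow_mem_pow hπ.not_isUnit (s j))
    rw [map_transpose_mul_mul, hL j, ← map_transpose_mul_mul, hT]
    rw [Matrix.map_smul' _ _ _ (map_mul _), hπj, zero_smul]
  obtain ⟨Q, hQ⟩ := exists_mul_eq_one_of_map_quotient_eq
    ((Ideal.pow_le_self one_ne_zero).trans (maximalIdeal_le_jacobson ⊥)) (hL 1).symm (hP (s 1))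
  set φ := algebraMap R (FractionRing R)
  have hQφ : Q.map φ * L.map φ = 1 := by
    rw [← Matrix.map_mul, hQ, Matrix.map_one _ (map_zero φ) (map_one φ)]
  have hisoφ : (L.map φ)ᵀ * G.map φ * L.map φ = 0 := by
    rw [← map_transpose_mul_mul, hiso, Matrix.map_zero _ (map_zero φ)]
  have hdetφ : IsUnit (G.map φ).det := by
    simpa [← RingHom.mapMatrix_apply, ← RingHom.map_det, φ] using hdet
  exact ⟨⟨L.map φ, ⟨Q.map φ, hQφ⟩, hisoφ⟩,
    by simpa using two_mul_card_le_of_transpose_mul_mul_eq_zero hdetφ hQφ hisoφ⟩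

/-- Let `R` be the ring of integers of a non-archimedean local field in which `2` is a unit or a
prime.  If `M` (with Gram matrix `G`) is a primitively `n`-universal nondegenerate `R`-lattice,
then the quadratic space `FM` over the fraction field contains an `n`-dimensional totally
isotropic subspace (Witt index `≥ n`); in particular `rank M ≥ 2n`. -/
theorem witt_index_of_primitively_universal
    (R : Type*) [CommRing R] [IsDomain R] [IsDiscreteValuationRing R]
    [IsAdicComplete (IsLocalRing.maximalIdeal R) R]
    [Finite (IsLocalRing.ResidueField R)]
    (h2 : IsUnit (2 : R) ∨ Prime (2 : R))
    {m n : ℕ} (hn : 1 ≤ n) (G : Matrix (Fin m) (Fin m) R)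
    (hG : G.IsSymm) (hdet : G.det ≠ 0)
    (huniv : ∀ N : Matrix (Fin n) (Fin n) R, N.IsSymm → N.det ≠ 0 → PrimRep N G) :
    (∃ T : Matrix (Fin m) (Fin n) (FractionRing R),
        (∃ P : Matrix (Fin n) (Fin m) (FractionRing R), P * T = 1) ∧
          Tᵀ * G.map (algebraMap R (FractionRing R)) * T = 0) ∧
      2 * n ≤ m :=
  witt_index_of_primitively_universal_general R G hdet huniv
end

section
/- Let M be a nondegenerate R-lattice over the ring of integers R of a local field of characteristic ≠ 2, and let N, N' be R-lattices of the same rank n with Gram matrices G, G' such that all entries of G − G' lie in 4(dM)²𝔭, where dM is the discriminant and 𝔭 the maximal ideal. Then N is primitively represented by M if and only if N' is primitively represented by M. -/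
/-!
Given `T` with `Tᵀ M T = G` and a left inverse `P`, put `d = det M`, `Q = P (adj M) Pᵀ` and
try `T' = T + 2d (adj M) Pᵀ Y` with `Y` symmetric. Since `M (adj M) = d` and `P T = 1`, the
Gram matrix of `T'` is `G + 4d² (Y + d Y Q Y)`, so writing `G - G' = 4d² C` with `C ≡ 0 mod 𝔭`
(symmetric, as `G` and `G'` are) it suffices to solve `Y = -C - d Y Q Y`. The right-hand side
is a contraction for the `𝔭`-adic filtration on matrices with entries in `𝔭`, so by
completeness it has a unique fixed point there, which is symmetric by uniqueness. As
`Y ≡ 0 mod 𝔭`, `P T' ≡ 1` is invertible, hence `T'` is again primitive.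
-/

open Matrix

namespace Ideal

variable {R : Type*} [CommRing R] {n : Type*} [Fintype n] [DecidableEq n]

theorem mul_mem_matrix_mul {I J : Ideal R} {A B : Matrix n n R} (hA : A ∈ I.matrix n)
    (hB : B ∈ J.matrix n) : A * B ∈ (I * J).matrix n := fun i j =>
  sum_mem _ fun k _ => mul_mem_mul (hA i k) (hB k j)

theorem smul_mem_matrix {I : Ideal R} (r : R) {A : Matrix n n R} (hA : A ∈ I.matrix n) :
    r • A ∈ I.matrix n := fun i j => I.mul_mem_left r (hA i j)

theorem transpose_mem_matrix {I : Ideal R} {A : Matrix n n R} (hA : A ∈ I.matrix n) :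
    Aᵀ ∈ I.matrix n := fun i j => hA j i

end Ideal

namespace Matrix

section AdicFiltration

variable {R : Type*} [CommRing R] {n : Type*} [Fintype n] [DecidableEq n]

def IsAdicContraction (I : Ideal R) (Φ : Matrix n n R → Matrix n n R) : Prop :=
  ∀ X ∈ I.matrix n, ∀ Y ∈ I.matrix n, ∀ k,
    X - Y ∈ (I ^ k).matrix n → Φ X - Φ Y ∈ (I ^ (k + 1)).matrix n

variable {I : Ideal R}

theorem eq_zero_of_forall_mem_pow_matrix [IsHausdorff I R] {A : Matrix n n R}
    (hA : ∀ k, A ∈ (I ^ k).matrix n) : A = 0 := by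
  ext i j
  refine IsHausdorff.haus ‹_› _ fun k => ?_
  rw [SModEq.zero, smul_eq_mul, Ideal.mul_top]
  exact hA k i j

theorem exists_limit_of_succ_sub_mem_pow_matrix [IsPrecomplete I R] (f : ℕ → Matrix n n R)
    (hf : ∀ k, f (k + 1) - f k ∈ (I ^ k).matrix n) :
    ∃ L, ∀ k, f k - L ∈ (I ^ k).matrix n := by
  have cauchy {a b : ℕ} (hab : a ≤ b) : f b - f a ∈ (I ^ a).matrix n := by
    induction b, hab using Nat.le_induction with
    | base => simp
    | succ b hab ih =>
      rw [← sub_add_sub_cancel]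
      exact add_mem (Ideal.matrix_monotone n (Ideal.pow_le_pow_right hab) (hf b)) ih
  have entry (i j : n) : ∃ L : R, ∀ k, f k i j ≡ L [SMOD (I ^ k • ⊤ : Submodule R R)] := by
    refine IsPrecomplete.prec ‹_› fun {a b} hab => ?_
    rw [SModEq.sub_mem, smul_eq_mul, Ideal.mul_top, ← neg_sub]
    exact neg_mem (cauchy hab i j)
  choose L hL using entry
  refine ⟨of L, fun k i j => ?_⟩
  have := hL i j k
  rwa [SModEq.sub_mem, smul_eq_mul, Ideal.mul_top] at this

theorem IsAdicContraction.eq_of_isFixedPt [IsHausdorff I R]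
    {Φ : Matrix n n R → Matrix n n R} (hΦ : IsAdicContraction I Φ)
    {X Y : Matrix n n R} (hX : X ∈ I.matrix n) (hY : Y ∈ I.matrix n)
    (hΦX : Φ X = X) (hΦY : Φ Y = Y) : X = Y := by
  rw [← sub_eq_zero]
  refine eq_zero_of_forall_mem_pow_matrix (I := I) fun k => ?_
  induction k with
  | zero => simp
  | succ k ih => simpa only [hΦX, hΦY] using hΦ X hX Y hY k ih

theorem IsAdicContraction.exists_isFixedPt [IsAdicComplete I R]
    {Φ : Matrix n n R → Matrix n n R} (hΦ : IsAdicContraction I Φ) (hΦ₀ : Φ 0 ∈ I.matrix n) :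
    ∃ X ∈ I.matrix n, Φ X = X := by
  have maps_to (X) (hX : X ∈ I.matrix n) : Φ X ∈ I.matrix n := by
    have h := hΦ X hX 0 (zero_mem _) 0 (by simp)
    rw [zero_add, pow_one] at h
    simpa only [sub_add_cancel] using add_mem h hΦ₀
  set f : ℕ → Matrix n n R := fun k => Φ^[k] 0
  have hf_mem (k) : f k ∈ I.matrix n := by
    induction k with
    | zero => exact zero_mem _
    | succ k ih => simpa only [f, Function.iterate_succ_apply'] using maps_to _ ih
  have hf_succ (k) : f (k + 1) - f k ∈ (I ^ k).matrix n := by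
    induction k with
    | zero => simp
    | succ k ih =>
      simpa only [f, Function.iterate_succ_apply'] using hΦ _ (hf_mem (k + 1)) _ (hf_mem k) k ih
  obtain ⟨L, hL⟩ := exists_limit_of_succ_sub_mem_pow_matrix f hf_succ
  have hL_mem : L ∈ I.matrix n := by
    have h := hL 1
    rw [pow_one] at h
    simpa only [sub_sub_cancel] using sub_mem (hf_mem 1) h
  refine ⟨L, hL_mem, sub_eq_zero.mp <| eq_zero_of_forall_mem_pow_matrix (I := I) fun k => ?_⟩
  have hΦL : Φ L - f (k + 1) ∈ (I ^ (k + 1)).matrix n := by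
    simpa only [f, Function.iterate_succ_apply'] using
      hΦ L hL_mem (f k) (hf_mem k) k (by simpa only [neg_sub] using neg_mem (hL k))
  refine Ideal.matrix_monotone n (Ideal.pow_le_pow_right k.le_succ) ?_
  simpa only [sub_add_sub_cancel] using add_mem hΦL (hL (k + 1))

theorem isAdicContraction_add_mul_mul (C Q : Matrix n n R) :
    IsAdicContraction I (fun X => C + X * Q * X) := by
  intro X hX Y hY k hXY
  have hsplit : C + X * Q * X - (C + Y * Q * Y) = X * Q * (X - Y) + (X - Y) * Q * Y := by
    noncomm_ring
  have hQ : Q ∈ (⊤ : Ideal R).matrix n := fun _ _ => Submodule.mem_top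
  have hXQ := Ideal.mul_mem_matrix_mul hX hQ
  have hXYQ := Ideal.mul_mem_matrix_mul hXY hQ
  rw [Ideal.mul_top] at hXQ hXYQ
  rw [hsplit, pow_succ]
  exact add_mem (mul_comm I (I ^ k) ▸ Ideal.mul_mem_matrix_mul hXQ hXY)
    (Ideal.mul_mem_matrix_mul hXYQ hY)

theorem exists_isSymm_eq_add_mul_mul [IsAdicComplete I R] {C Q : Matrix n n R}
    (hC : C ∈ I.matrix n) (hCs : C.IsSymm) (hQs : Q.IsSymm) :
    ∃ Y ∈ I.matrix n, Y.IsSymm ∧ Y = C + Y * Q * Y := by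
  have hΦ := isAdicContraction_add_mul_mul (I := I) C Q
  obtain ⟨Y, hY, hΦY⟩ := hΦ.exists_isFixedPt (by simpa using hC)
  refine ⟨Y, hY, hΦ.eq_of_isFixedPt (Ideal.transpose_mem_matrix hY) hY ?_ hΦY, hΦY.symm⟩
  conv_rhs => rw [← hΦY]
  simp only [transpose_add, transpose_mul, hCs.eq, hQs.eq, Matrix.mul_assoc]

end AdicFiltration

theorem exists_mul_eq_one_of_sub_one_mem {R : Type*} [CommRing R] [IsLocalRing R]
    {n : Type*} [Fintype n] [DecidableEq n] {B : Matrix n n R}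
    (hB : B - 1 ∈ (IsLocalRing.maximalIdeal R).matrix n) : ∃ Z, Z * B = 1 := by
  have hJ : B - 1 ∈ (⊥ : Ideal (Matrix n n R)).jacobson := by
    rw [← Ideal.matrix_bot]
    refine Ideal.matrix_jacobson_le _ ?_
    rwa [IsLocalRing.jacobson_eq_maximalIdeal ⊥ bot_ne_top]
  obtain ⟨Z, hZ⟩ := Ideal.mem_jacobson_iff.mp hJ 1
  refine ⟨Z, ?_⟩
  rw [Ideal.mem_bot, mul_one, mul_sub, mul_one, sub_add_cancel, sub_eq_zero] at hZ
  exact hZ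

section Perturbation

variable {R : Type*} [CommRing R] {ι κ : Type*} [Fintype ι] [Fintype κ] [DecidableEq ι]
  [DecidableEq κ]
  {M : Matrix ι ι R} {T : Matrix ι κ R} {P : Matrix κ ι R} {Y : Matrix κ κ R}

theorem transpose_mul_mul_add_adjugate (hM : M.IsSymm) (hPT : P * T = 1)
    (hY : Y.IsSymm) :
    (T + (2 * M.det) • (M.adjugate * Pᵀ * Y))ᵀ * M * (T + (2 * M.det) • (M.adjugate * Pᵀ * Y)) =
      Tᵀ * M * T + (4 * M.det ^ 2) • (Y + M.det • (Y * (P * M.adjugate * Pᵀ) * Y)) := by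
  set d := M.det
  set A := M.adjugate
  have hA : Aᵀ = A := by rw [adjugate_transpose, hM.eq]
  have hMA (X : Matrix ι κ R) : M * (A * X) = d • X := by
    rw [← Matrix.mul_assoc, mul_adjugate, Matrix.smul_mul, Matrix.one_mul]
  have hAM (X : Matrix ι κ R) : A * (M * X) = d • X := by
    rw [← Matrix.mul_assoc, adjugate_mul, Matrix.smul_mul, Matrix.one_mul]
  have hTP (X : Matrix κ κ R) : Tᵀ * (Pᵀ * X) = X := by
    rw [← Matrix.mul_assoc, ← transpose_mul, hPT, transpose_one, Matrix.one_mul]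
  simp only [transpose_add, transpose_smul, transpose_mul, transpose_transpose, hA, hY.eq,
    Matrix.add_mul, Matrix.mul_add, Matrix.smul_mul, Matrix.mul_smul, Matrix.mul_assoc, hMA, hAM,
    hTP, hPT, Matrix.mul_one]
  module

end Perturbation

theorem exists_isSymm_smul_eq {R : Type*} [CommRing R] {n : Type*} [LinearOrder n]
    {J : Ideal R} {a : R} {D : Matrix n n R} (hD : D.IsSymm)
    (h : ∀ i j, ∃ c ∈ J, D i j = a * c) :
    ∃ C : Matrix n n R, (∀ i j, C i j ∈ J) ∧ C.IsSymm ∧ D = a • C := by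
  choose c hcJ hc using h
  refine ⟨of fun i j => if i ≤ j then c i j else c j i, fun i j => ?_, ?_, ?_⟩
  · dsimp only [of_apply]
    split_ifs <;> apply hcJ
  · ext i j
    rcases lt_trichotomy i j with hij | rfl | hij
    · simp [hij.le, hij.not_ge]
    · rfl
    · simp [hij.le, hij.not_ge]
  · ext i j
    rw [smul_apply, of_apply, smul_eq_mul]
    split_ifs
    · exact hc i j
    · rw [← hD.apply, hc j i]

end Matrix

open IsLocalRing in
theorem PrimRep.sub_smul_det_sq {R : Type*} [CommRing R] [IsLocalRing R]
    [IsAdicComplete (maximalIdeal R) R] {ι κ : Type*} [Fintype ι] [Fintype κ] [DecidableEq ι]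
    [DecidableEq κ] {M : Matrix ι ι R} {G C : Matrix κ κ R} (hM : M.IsSymm) (h : PrimRep G M)
    (hC : C ∈ (maximalIdeal R).matrix κ) (hCs : C.IsSymm) :
    PrimRep (G - (4 * M.det ^ 2) • C) M := by
  obtain ⟨T, rfl, P, hPT⟩ := h
  set d := M.det
  set Q := P * M.adjugate * Pᵀ
  have hQs : Q.IsSymm := by
    simp only [Q, IsSymm, transpose_mul, transpose_transpose, adjugate_transpose, hM.eq,
      Matrix.mul_assoc]
  obtain ⟨Y, hY, hYs, hYeq⟩ := exists_isSymm_eq_add_mul_mul (neg_mem hC) hCs.neg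
    (hQs.smul d).neg
  have hYsol : Y + d • (Y * Q * Y) = -C := by
    nth_rewrite 1 [hYeq]
    simp only [Matrix.mul_neg, Matrix.neg_mul, Matrix.mul_smul, Matrix.smul_mul]
    abel
  refine ⟨T + (2 * d) • (M.adjugate * Pᵀ * Y), ?_, ?_⟩
  · rw [transpose_mul_mul_add_adjugate hM hPT hYs, hYsol, smul_neg, ← sub_eq_add_neg]
  · have hnear_one : P * (T + (2 * d) • (M.adjugate * Pᵀ * Y)) - 1 ∈ (maximalIdeal R).matrix κ := by
      rw [Matrix.mul_add, hPT, add_sub_cancel_left, Matrix.mul_smul, ← Matrix.mul_assoc,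
        ← Matrix.mul_assoc]
      exact Ideal.smul_mem_matrix _ ((Ideal.matrix κ _).mul_mem_left Q hY)
    obtain ⟨Z, hZ⟩ := exists_mul_eq_one_of_sub_one_mem hnear_one
    exact ⟨Z * P, by rwa [Matrix.mul_assoc]⟩

theorem primRep_congruent_iff_general
    (R : Type*) [CommRing R] [IsDomain R] [IsDiscreteValuationRing R]
    [IsAdicComplete (IsLocalRing.maximalIdeal R) R]
    {m n : ℕ} (M : Matrix (Fin m) (Fin m) R) (hM : M.IsSymm)
    (G G' : Matrix (Fin n) (Fin n) R) (hG : G.IsSymm) (hG' : G'.IsSymm)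
    (hclose : ∀ i j, ∃ c ∈ IsLocalRing.maximalIdeal R,
      G i j - G' i j = 4 * M.det ^ 2 * c) :
    PrimRep G M ↔ PrimRep G' M := by
  obtain ⟨C, hC, hCs, hGG'⟩ := Matrix.exists_isSymm_smul_eq (hG.sub hG') hclose
  have hG'_eq : G' = G - (4 * M.det ^ 2) • C := by rw [← hGG', sub_sub_cancel]
  have hG_eq : G = G' - (4 * M.det ^ 2) • -C := by
    rw [smul_neg, ← hGG', sub_neg_eq_add, add_sub_cancel]
  refine ⟨fun h => ?_, fun h => ?_⟩
  · simpa only [← hG'_eq] using h.sub_smul_det_sq hM hC hCs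
  · simpa only [← hG_eq] using h.sub_smul_det_sq hM (neg_mem hC) hCs.neg

/-- Hensel-type rigidity: if the Gram matrices of `N` and `N'` are congruent modulo
`4 (dM)² 𝔭`, then `N` is primitively represented by `M` iff `N'` is. -/
theorem primRep_congruent_iff
    (R : Type*) [CommRing R] [IsDomain R] [IsDiscreteValuationRing R]
    [IsAdicComplete (IsLocalRing.maximalIdeal R) R]
    [Finite (IsLocalRing.ResidueField R)]
    (h2 : (2 : R) ≠ 0)
    {m n : ℕ} (M : Matrix (Fin m) (Fin m) R) (hM : M.IsSymm) (hMd : M.det ≠ 0)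
    (G G' : Matrix (Fin n) (Fin n) R) (hG : G.IsSymm) (hG' : G'.IsSymm)
    (hclose : ∀ i j, ∃ c ∈ IsLocalRing.maximalIdeal R,
      G i j - G' i j = 4 * M.det ^ 2 * c) :
    PrimRep G M ↔ PrimRep G' M :=
  primRep_congruent_iff_general R M hM G G' hG hG' hclose
end

section
/- Let ε ∈ R^× be a unit in an unramified dyadic local ring R. Then ℍ ⊥ ⟨ε⟩ is isometric to ⟨1, -1, ε⟩, and ℍ ⊥ ⟨ε⟩ primitively represents every binary R-lattice of the form ⟨α, ε⟩ for any α ∈ R. In particular, ℍ ⊥ ⟨ε⟩ is primitively 1-universal. -/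
/-!
Since `2` is a uniformizer, the residue field is finite of characteristic `2`, so every residue
class is a square; hence, for a fixed unit `ε`, every `γ : R` can be written `γ = ε z² + 2 s`.
Each such decomposition gives explicit vectors in `ℍ ⊥ ⟨ε⟩`: `(1, s, z)` has norm `2 s + ε z² = γ`
and together with `(0, -ε z, 1)` spans a primitive copy of `⟨γ, ε⟩`, which contains `⟨γ⟩` as a
primitive sublattice. For `γ = 1`, the vectors `(s, 1, a)`, `(s - 1, 1, a)`, `(-ε a, 0, 1)` form
a basis of norms `1, -1, ε` that are pairwise orthogonal.
-/

open Matrix IsLocalRing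

theorem PrimRep.trans {R : Type*} [CommRing R] {ι κ μ : Type*} [Fintype ι] [Fintype κ]
    [Fintype μ] [DecidableEq ι] [DecidableEq κ] {G : Matrix κ κ R} {H : Matrix ι ι R}
    {K : Matrix μ μ R} (hGH : PrimRep G H) (hHK : PrimRep H K) : PrimRep G K := by
  obtain ⟨T₁, hT₁, P₁, hP₁⟩ := hGH
  obtain ⟨T₂, hT₂, P₂, hP₂⟩ := hHK
  refine ⟨T₂ * T₁, ?_, P₁ * P₂, ?_⟩
  · rw [← hT₁, ← hT₂, transpose_mul]
    simp only [Matrix.mul_assoc]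
  · rw [Matrix.mul_assoc, ← Matrix.mul_assoc P₂, hP₂, Matrix.one_mul, hP₁]

theorem exists_sub_sq_mem_maximalIdeal {R : Type*} [CommRing R] [IsLocalRing R]
    [Finite (ResidueField R)] (h2 : (2 : R) ∈ maximalIdeal R) (γ : R) :
    ∃ z : R, γ - z ^ 2 ∈ maximalIdeal R := by
  have hchar : ringChar (ResidueField R) = 2 := by
    refine CharP.ringChar_of_prime_eq_zero Nat.prime_two ?_
    simpa only [map_ofNat, Nat.cast_ofNat] using (residue_eq_zero_iff (2 : R)).mpr h2
  obtain ⟨w, hw⟩ := FiniteField.isSquare_of_char_two hchar (residue R γ)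
  obtain ⟨z, rfl⟩ := residue_surjective w
  refine ⟨z, (residue_eq_zero_iff _).mp ?_⟩
  rw [map_sub, hw, map_pow, sq, sub_self]

theorem exists_eq_unit_mul_sq_add_two_mul {R : Type*} [CommRing R] [IsLocalRing R]
    [Finite (ResidueField R)] (hmax : maximalIdeal R = Ideal.span {2}) (ε : Rˣ) (γ : R) :
    ∃ z s : R, γ = ε * z ^ 2 + 2 * s := by
  obtain ⟨z, hz⟩ := exists_sub_sq_mem_maximalIdeal (hmax ▸ Ideal.mem_span_singleton_self 2)
    (γ * ↑ε⁻¹)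
  obtain ⟨t, ht⟩ := Ideal.mem_span_singleton'.mp (hmax ▸ hz)
  refine ⟨z, ε * t, ?_⟩
  linear_combination -(ε : R) * ht - γ * ε.mul_inv

section ExplicitBases

variable {R : Type*} [CommRing R]

theorem hyperbolic_sum_isometric_diag_of_eq {e a s : R} (h : 1 = e * a ^ 2 + 2 * s) :
    ∃ T : Matrix (Fin 3) (Fin 3) R, IsUnit T.det ∧
      Tᵀ * !![0, 1, 0; 1, 0, 0; 0, 0, e] * T = !![1, 0, 0; 0, -1, 0; 0, 0, e] := by
  refine ⟨!![s, s - 1, -e * a; 1, 1, 0; a, a, 1], ?_, ?_⟩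
  · have hdet : det !![s, s - 1, -e * a; 1, 1, 0; a, a, 1] = 1 := by
      simp [det_fin_three]
    rw [hdet]
    exact isUnit_one
  · ext i j
    fin_cases i <;> fin_cases j <;> simp [mul_apply, Fin.sum_univ_succ] <;> grind

theorem primRep_hyperbolic_sum_of_eq {e α z s : R} (h : α = e * z ^ 2 + 2 * s) :
    PrimRep !![α, 0; 0, e] !![0, 1, 0; 1, 0, 0; 0, 0, e] := by
  subst h
  refine ⟨!![1, 0; s, -e * z; z, 1], ?_, !![1, 0, 0; -z, 0, 1], ?_⟩ <;>
    ext i j <;> fin_cases i <;> fin_cases j <;> simp [mul_apply, Fin.sum_univ_succ] <;> ring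

theorem primRep_first_of_diag_two (a b : R) : PrimRep !![a] !![a, 0; 0, b] :=
  ⟨!![1; 0], by ext i j; fin_cases i; fin_cases j; simp [mul_apply],
    !![1, 0], by ext i j; fin_cases i; fin_cases j; simp [mul_apply]⟩

end ExplicitBases

theorem hyp_perp_unit_isometric_and_primitively_one_universal_general
    (R : Type*) [CommRing R] [IsDomain R] [IsDiscreteValuationRing R]
    [Finite (IsLocalRing.ResidueField R)]
    (h2 : Prime (2 : R)) (ε : Rˣ) :
    (∃ T : Matrix (Fin 3) (Fin 3) R, IsUnit T.det ∧
        Tᵀ * !![0, 1, 0; 1, 0, 0; 0, 0, (ε : R)] * T = !![1, 0, 0; 0, -1, 0; 0, 0, (ε : R)]) ∧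
      (∀ α : R, PrimRep (!![α, 0; 0, (ε : R)] : Matrix (Fin 2) (Fin 2) R)
        (!![0, 1, 0; 1, 0, 0; 0, 0, (ε : R)] : Matrix (Fin 3) (Fin 3) R)) ∧
      (∀ β : R, β ≠ 0 → PrimRep (!![β] : Matrix (Fin 1) (Fin 1) R)
        (!![0, 1, 0; 1, 0, 0; 0, 0, (ε : R)] : Matrix (Fin 3) (Fin 3) R)) := by
  have hdecomp := exists_eq_unit_mul_sq_add_two_mul h2.irreducible.maximalIdeal_eq ε
  have hbinary (α : R) : PrimRep !![α, 0; 0, (ε : R)] !![0, 1, 0; 1, 0, 0; 0, 0, (ε : R)] := by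
    obtain ⟨z, s, hα⟩ := hdecomp α
    exact primRep_hyperbolic_sum_of_eq hα
  refine ⟨?_, hbinary, fun β _ => (primRep_first_of_diag_two β ε).trans (hbinary β)⟩
  obtain ⟨a, s, h1⟩ := hdecomp 1
  exact hyperbolic_sum_isometric_diag_of_eq h1

/-- Over an unramified dyadic local ring `R` and any unit `ε`: `ℍ ⊥ ⟨ε⟩ ≅ ⟨1,-1,ε⟩`,
`ℍ ⊥ ⟨ε⟩` primitively represents every binary lattice `⟨α, ε⟩`, and `ℍ ⊥ ⟨ε⟩` is
primitively `1`-universal. -/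
theorem hyp_perp_unit_isometric_and_primitively_one_universal
    (R : Type*) [CommRing R] [IsDomain R] [IsDiscreteValuationRing R]
    [IsAdicComplete (IsLocalRing.maximalIdeal R) R]
    [Finite (IsLocalRing.ResidueField R)]
    (h2 : Prime (2 : R)) (ε : Rˣ) :
    (∃ T : Matrix (Fin 3) (Fin 3) R, IsUnit T.det ∧
        Tᵀ * !![0, 1, 0; 1, 0, 0; 0, 0, (ε : R)] * T = !![1, 0, 0; 0, -1, 0; 0, 0, (ε : R)]) ∧
      (∀ α : R, PrimRep (!![α, 0; 0, (ε : R)] : Matrix (Fin 2) (Fin 2) R)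
        (!![0, 1, 0; 1, 0, 0; 0, 0, (ε : R)] : Matrix (Fin 3) (Fin 3) R)) ∧
      (∀ β : R, β ≠ 0 → PrimRep (!![β] : Matrix (Fin 1) (Fin 1) R)
        (!![0, 1, 0; 1, 0, 0; 0, 0, (ε : R)] : Matrix (Fin 3) (Fin 3) R)) :=
  hyp_perp_unit_isometric_and_primitively_one_universal_general R h2 ε
end

section
/- For every n ≥ 5, the ℤ₂-lattice ℍ^{n−1} ⊥ ⟨1, −1⟩ of rank 2n is primitively n-universal, i.e., it primitively represents every nondegenerate integral ℤ₂-lattice of rank n. -/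
open Matrix

namespace PU


local notation "R2" => PadicInt 2

lemma two_dvd_iff_toZMod (z : ℤ_[2]) : (2:ℤ_[2]) ∣ z ↔ PadicInt.toZMod z = 0 := by
  have h1 : PadicInt.toZMod z = 0 ↔ z ∈ RingHom.ker (PadicInt.toZMod (p:=2)) := by
    simp [RingHom.mem_ker]
  rw [h1, PadicInt.ker_toZMod, PadicInt.maximalIdeal_eq_span_p, Ideal.mem_span_singleton]
  norm_num

lemma isUnit_of_not_two_dvd {a : ℤ_[2]} (h : ¬ (2:ℤ_[2]) ∣ a) : IsUnit a := by
  rcases lt_or_eq_of_le (PadicInt.norm_le_one a) with h1 | h1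
  · exact absurd (by simpa using (PadicInt.norm_lt_one_iff_dvd a).mp h1) h
  · exact PadicInt.isUnit_iff.mpr h1

lemma not_two_dvd_of_isUnit {a : ℤ_[2]} (h : IsUnit a) : ¬ (2:ℤ_[2]) ∣ a := by
  intro ⟨c, hc⟩
  have h2 : ¬ IsUnit (2:ℤ_[2]) := by
    intro hu
    have := PadicInt.isUnit_iff.mp hu
    rw [show ((2:ℤ_[2])) = ((2:ℕ):ℤ_[2]) by norm_num, PadicInt.norm_p (p:=2)] at this
    norm_num at this
  exact h2 (isUnit_of_mul_isUnit_left (hc ▸ h))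

lemma unit_or_two_dvd (z : ℤ_[2]) : IsUnit z ∨ (2:ℤ_[2]) ∣ z := by
  by_cases h : (2:ℤ_[2]) ∣ z
  · exact Or.inr h
  · exact Or.inl (isUnit_of_not_two_dvd h)

/-- lift of a `ZMod 2` element to `ℤ_[2]`. -/
noncomputable def lift2 (v : ZMod 2) : ℤ_[2] := if v = 0 then 0 else 1

lemma toZMod_lift2 (v : ZMod 2) : PadicInt.toZMod (lift2 v) = v := by
  unfold lift2
  have hv : ∀ w : ZMod 2, w = 0 ∨ w = 1 := by decide
  rcases hv v with h | h <;> subst h <;> simp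

/-- the quadratic form value. -/
noncomputable def Qf {N : ℕ} (G : Matrix (Fin N) (Fin N) ℤ_[2]) (x : Fin N → ℤ_[2]) : ℤ_[2] :=
  x ⬝ᵥ G.mulVec x

/-- the bilinear form value. -/
noncomputable def Bf {N : ℕ} (G : Matrix (Fin N) (Fin N) ℤ_[2]) (x y : Fin N → ℤ_[2]) : ℤ_[2] :=
  x ⬝ᵥ G.mulVec y

lemma Bf_symm {N : ℕ} {G : Matrix (Fin N) (Fin N) ℤ_[2]} (hG : G.IsSymm)
    (x y : Fin N → ℤ_[2]) : Bf G x y = Bf G y x := by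
  unfold Bf
  nth_rewrite 1 [← hG]
  rw [Matrix.mulVec_transpose, dotProduct_comm, ← Matrix.dotProduct_mulVec]

lemma Qf_add {N : ℕ} {G : Matrix (Fin N) (Fin N) ℤ_[2]} (hG : G.IsSymm)
    (x y : Fin N → ℤ_[2]) : Qf G (x + y) = Qf G x + Qf G y + 2 * Bf G x y := by
  unfold Qf Bf
  rw [Matrix.mulVec_add, dotProduct_add, add_dotProduct, add_dotProduct]
  have h := Bf_symm hG y x
  unfold Bf at h
  rw [h]; ring

lemma Qf_smul {N : ℕ} (G : Matrix (Fin N) (Fin N) ℤ_[2]) (c : ℤ_[2]) (x : Fin N → ℤ_[2]) :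
    Qf G (c • x) = c^2 * Qf G x := by
  unfold Qf
  rw [Matrix.mulVec_smul, dotProduct_smul, smul_dotProduct]
  simp [smul_eq_mul]; ring




-- ===== mod 2 reduction helpers =====

noncomputable def bar {N : ℕ} (x : Fin N → ℤ_[2]) : Fin N → ZMod 2 :=
  fun k => PadicInt.toZMod (x k)

noncomputable def mbar {N : ℕ} (G : Matrix (Fin N) (Fin N) ℤ_[2]) :
    Matrix (Fin N) (Fin N) (ZMod 2) := G.map PadicInt.toZMod

lemma bar_dot {N : ℕ} (x y : Fin N → ℤ_[2]) :
    PadicInt.toZMod (x ⬝ᵥ y) = bar x ⬝ᵥ bar y := by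
  simp [dotProduct, bar, map_sum]

lemma bar_mulVec {N : ℕ} (G : Matrix (Fin N) (Fin N) ℤ_[2]) (x : Fin N → ℤ_[2]) :
    bar (G.mulVec x) = (mbar G).mulVec (bar x) := by
  funext k
  simp [Matrix.mulVec, dotProduct, bar, mbar, map_sum]




lemma dot_mulVec_symm {α : Type*} [CommRing α] {N : ℕ} {M : Matrix (Fin N) (Fin N) α}
    (hM : M.IsSymm) (x y : Fin N → α) : x ⬝ᵥ M.mulVec y = y ⬝ᵥ M.mulVec x := by
  nth_rewrite 1 [← hM]
  rw [Matrix.mulVec_transpose, dotProduct_comm, ← Matrix.dotProduct_mulVec]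

/-- In char 2, `x ↦ xᵀ M x` is linear for symmetric `M`. -/
noncomputable def qlin {N : ℕ} (M : Matrix (Fin N) (Fin N) (ZMod 2)) (hM : M.IsSymm) :
    (Fin N → ZMod 2) →ₗ[ZMod 2] ZMod 2 where
  toFun x := x ⬝ᵥ M.mulVec x
  map_add' x y := by
    show (x + y) ⬝ᵥ M.mulVec (x + y) = x ⬝ᵥ M.mulVec x + y ⬝ᵥ M.mulVec y
    rw [Matrix.mulVec_add, dotProduct_add, add_dotProduct,
      add_dotProduct, dot_mulVec_symm hM y x]
    have h2 : (2 : ZMod 2) = 0 := by decide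
    ring_nf
    rw [h2]
    ring
  map_smul' c x := by
    show (c • x) ⬝ᵥ M.mulVec (c • x) = c • (x ⬝ᵥ M.mulVec x)
    rw [Matrix.mulVec_smul, dotProduct_smul, smul_dotProduct]
    have h2 : ∀ a : ZMod 2, a • a = a := by decide
    simp only [smul_eq_mul, RingHom.id_apply]
    have := h2 c
    simp only [smul_eq_mul] at this
    rw [← mul_assoc, this]

lemma qlin_apply {N : ℕ} (M : Matrix (Fin N) (Fin N) (ZMod 2)) (hM : M.IsSymm)
    (x : Fin N → ZMod 2) : qlin M hM x = x ⬝ᵥ M.mulVec x := rfl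

/-- a linear functional vanishing when the diagonal vanishes -/
lemma qlin_eq_zero {N : ℕ} (M : Matrix (Fin N) (Fin N) (ZMod 2)) (hM : M.IsSymm)
    (hdiag : ∀ i, M i i = 0) (x : Fin N → ZMod 2) : x ⬝ᵥ M.mulVec x = 0 := by
  have h := LinearMap.pi_apply_eq_sum_univ (qlin M hM) x
  rw [qlin_apply] at h
  rw [h]
  apply Finset.sum_eq_zero
  intro i _
  have : qlin M hM (fun j => if i = j then 1 else 0) = M i i := by
    rw [qlin_apply]
    simp [dotProduct, Matrix.mulVec, Finset.sum_ite_eq, Finset.sum_ite_eq']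
  rw [this, hdiag, smul_zero]




lemma exists_indep_triple (f : (Fin 5 → ZMod 2) →ₗ[ZMod 2] (Fin 2 → ZMod 2)) :
    ∃ r : Fin 3 → (Fin 5 → ZMod 2),
      LinearIndependent (ZMod 2) r ∧ ∀ a, f (r a) = 0 := by
  have hrank := LinearMap.finrank_range_add_finrank_ker f
  have h5 : Module.finrank (ZMod 2) (Fin 5 → ZMod 2) = 5 := by
    simp [Module.finrank_pi]
  have h2 : Module.finrank (ZMod 2) ↥(LinearMap.range f) ≤ 2 := by
    have := Submodule.finrank_le (LinearMap.range f)
    simpa [Module.finrank_pi] using this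
  have h3 : 3 ≤ Module.finrank (ZMod 2) ↥(LinearMap.ker f) := by omega
  set K := LinearMap.ker f
  have b := Module.finBasis (ZMod 2) ↥K
  refine ⟨fun a => (b (Fin.castLE h3 a) : (Fin 5 → ZMod 2)), ?_, ?_⟩
  · have h1 : LinearIndependent (ZMod 2) (fun a : Fin 3 => b (Fin.castLE h3 a)) :=
      b.linearIndependent.comp (Fin.castLE h3) (Fin.castLE_injective h3)
    exact h1.map' K.subtype K.ker_subtype
  · intro a
    exact (b (Fin.castLE h3 a)).2

lemma indep_sum_ne_zero {r : Fin 3 → (Fin 5 → ZMod 2)}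
    (h : LinearIndependent (ZMod 2) r) (S : Finset (Fin 3)) (hS : S.Nonempty) :
    (∑ a ∈ S, r a) ≠ 0 := by
  intro h0
  have := Fintype.linearIndependent_iff.mp h (fun a => if a ∈ S then 1 else 0) ?_
  · obtain ⟨a, ha⟩ := hS
    have := this a
    simp [ha] at this
  · rw [← h0]
    rw [show (∑ i : Fin 3, (if i ∈ S then (1:ZMod 2) else 0) • r i)
        = ∑ i : Fin 3, (if i ∈ S then r i else 0) by
      apply Finset.sum_congr rfl
      intro i _
      by_cases hi : i ∈ S <;> simp [hi]]
    rw [Finset.sum_ite_mem]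
    congr 1
    simp [Finset.inter_comm, Finset.univ_inter]

lemma odd_add_odd {a b : ℤ_[2]} (ha : ¬ (2:ℤ_[2]) ∣ a) (hb : ¬ (2:ℤ_[2]) ∣ b) :
    (2:ℤ_[2]) ∣ (a + b) := by
  rw [two_dvd_iff_toZMod] at ha hb ⊢
  rw [map_add]
  have h1 : ∀ v : ZMod 2, v ≠ 0 → v = 1 := by decide
  rw [h1 _ ha, h1 _ hb]; decide

lemma two_ne_zero' : (2:ℤ_[2]) ≠ 0 := by norm_num

lemma four_ne_zero' : (4:ℤ_[2]) ≠ 0 := by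
  have : (4:ℤ_[2]) = 2 * 2 := by norm_num
  rw [this]
  exact mul_ne_zero two_ne_zero' two_ne_zero'

lemma Bf_add_left {N : ℕ} (G : Matrix (Fin N) (Fin N) ℤ_[2]) (x y z : Fin N → ℤ_[2]) :
    Bf G (x + y) z = Bf G x z + Bf G y z := by
  unfold Bf; rw [add_dotProduct]

lemma bar_add {N : ℕ} (x y : Fin N → ℤ_[2]) : bar (x + y) = bar x + bar y := by
  funext k; simp [bar]

lemma prim_of_bar_ne {N : ℕ} {x : Fin N → ℤ_[2]} (h : bar x ≠ 0) :
    ∃ k, ¬ (2:ℤ_[2]) ∣ x k := by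
  have : ∃ k, bar x k ≠ 0 := by
    by_contra hc
    push_neg at hc
    exact h (funext hc)
  obtain ⟨k, hk⟩ := this
  exact ⟨k, fun hd => hk ((two_dvd_iff_toZMod _).mp hd)⟩

lemma p_lemma {G : Matrix (Fin 5) (Fin 5) ℤ_[2]} (hG : G.IsSymm)
    (rb : Fin 3 → (Fin 5 → ZMod 2)) (hli : LinearIndependent (ZMod 2) rb)
    (r : Fin 3 → (Fin 5 → ℤ_[2])) (hr : ∀ a, bar (r a) = rb a)
    (h4 : ∀ a, (4:ℤ_[2]) ∣ Qf G (r a))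
    (hB : ∀ a b, a ≠ b → (2:ℤ_[2]) ∣ Bf G (r a) (r b)) :
    ∃ x : Fin 5 → ℤ_[2], (∃ k, ¬ (2:ℤ_[2]) ∣ x k) ∧ (8:ℤ_[2]) ∣ Qf G x := by
  by_cases h8 : ∃ a, (8:ℤ_[2]) ∣ Qf G (r a)
  · obtain ⟨a, ha⟩ := h8
    refine ⟨r a, prim_of_bar_ne ?_, ha⟩
    rw [hr a]; exact hli.ne_zero a
  · push_neg at h8
    -- each Q (r a) = 4 * u a with u a odd
    have hu : ∀ a, ∃ u : ℤ_[2], Qf G (r a) = 4 * u ∧ ¬ (2:ℤ_[2]) ∣ u := by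
      intro a
      obtain ⟨u, hu⟩ := h4 a
      refine ⟨u, hu, fun h2 => h8 a ?_⟩
      obtain ⟨w, rfl⟩ := h2
      exact ⟨w, by rw [hu]; ring⟩
    choose u huq huo using hu
    by_cases hB4 : ∃ a b, a ≠ b ∧ (4:ℤ_[2]) ∣ Bf G (r a) (r b)
    · obtain ⟨a, b, hab, ⟨v, hv⟩⟩ := hB4
      refine ⟨r a + r b, prim_of_bar_ne ?_, ?_⟩
      · rw [bar_add, hr a, hr b]
        have := indep_sum_ne_zero hli {a, b} ⟨a, by simp⟩
        rwa [Finset.sum_pair hab] at this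
      · rw [Qf_add hG, huq a, huq b, hv]
        obtain ⟨w, hw⟩ := odd_add_odd (huo a) (huo b)
        refine ⟨w + v, ?_⟩
        rw [show (4:ℤ_[2]) * u a + 4 * u b = 4 * (u a + u b) by ring, hw]
        ring
    · push_neg at hB4
      have hBv : ∀ a b, a ≠ b → ∃ v : ℤ_[2], Bf G (r a) (r b) = 2 * v ∧ ¬ (2:ℤ_[2]) ∣ v := by
        intro a b hab
        obtain ⟨v, hv⟩ := hB a b hab
        refine ⟨v, hv, fun h2 => hB4 a b hab ?_⟩
        obtain ⟨w, rfl⟩ := h2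
        exact ⟨w, by rw [hv]; ring⟩
      obtain ⟨v01, hv01, ho01⟩ := hBv 0 1 (by decide)
      obtain ⟨v02, hv02, ho02⟩ := hBv 0 2 (by decide)
      obtain ⟨v12, hv12, ho12⟩ := hBv 1 2 (by decide)
      refine ⟨r 0 + r 1 + r 2, prim_of_bar_ne ?_, ?_⟩
      · rw [bar_add, bar_add, hr 0, hr 1, hr 2]
        have := indep_sum_ne_zero hli Finset.univ ⟨0, by simp⟩
        rwa [show ∑ a ∈ Finset.univ, rb a = rb 0 + rb 1 + rb 2 from Fin.sum_univ_three rb]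
          at this
      · rw [Qf_add hG, Qf_add hG, Bf_add_left, huq 0, huq 1, huq 2, hv01, hv02, hv12]
        obtain ⟨w1, hw1⟩ := odd_add_odd (huo 0) (huo 1)
        obtain ⟨w2, hw2⟩ := odd_add_odd (huo 2) ho01
        obtain ⟨w3, hw3⟩ := odd_add_odd ho02 ho12
        refine ⟨w1 + w2 + w3, ?_⟩
        linear_combination (4:ℤ_[2]) * hw1 + 4 * hw2 + 4 * hw3

noncomputable def ev {N : ℕ} (i : Fin N) : Fin N → ℤ_[2] := fun j => if j = i then 1 else 0

lemma mulVec_ev {N : ℕ} (G : Matrix (Fin N) (Fin N) ℤ_[2]) (i k : Fin N) :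
    (G.mulVec (ev i)) k = G k i := by
  simp [Matrix.mulVec, dotProduct, ev, mul_ite]

lemma dot_ev {N : ℕ} (x : Fin N → ℤ_[2]) (i : Fin N) : ev i ⬝ᵥ x = x i := by
  simp [dotProduct, ev, ite_mul]

lemma Qf_ev {N : ℕ} (G : Matrix (Fin N) (Fin N) ℤ_[2]) (i : Fin N) :
    Qf G (ev i) = G i i := by
  unfold Qf
  rw [dot_ev, mulVec_ev]

lemma Bf_ev_right {N : ℕ} {G : Matrix (Fin N) (Fin N) ℤ_[2]} (hG : G.IsSymm)
    (x : Fin N → ℤ_[2]) (i : Fin N) : Bf G x (ev i) = (G.mulVec x) i := by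
  unfold Bf
  rw [dot_mulVec_symm hG, dot_ev]

lemma Qf_add_ev {N : ℕ} {G : Matrix (Fin N) (Fin N) ℤ_[2]} (hG : G.IsSymm)
    (x : Fin N → ℤ_[2]) (i : Fin N) :
    Qf G (x + ev i) = Qf G x + G i i + 2 * (G.mulVec x) i := by
  rw [Qf_add hG, Qf_ev, Bf_ev_right hG]

lemma not_two_dvd_one : ¬ (2:ℤ_[2]) ∣ 1 := by
  rw [two_dvd_iff_toZMod, _root_.map_one]
  decide

lemma even_add_odd {a b : ℤ_[2]} (ha : (2:ℤ_[2]) ∣ a) (hb : ¬ (2:ℤ_[2]) ∣ b) :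
    ¬ (2:ℤ_[2]) ∣ (a + b) := by
  intro h
  exact hb (by simpa using dvd_sub h ha)

lemma mulVec_even {N : ℕ} (G : Matrix (Fin N) (Fin N) ℤ_[2]) {x : Fin N → ℤ_[2]}
    (h : ∀ k, (2:ℤ_[2]) ∣ x k) (k : Fin N) : (2:ℤ_[2]) ∣ (G.mulVec x) k := by
  unfold Matrix.mulVec dotProduct
  exact Finset.dvd_sum (fun j _ => Dvd.dvd.mul_left (h j) _)

lemma prim_of_mulVec_odd {N : ℕ} {G : Matrix (Fin N) (Fin N) ℤ_[2]} {x : Fin N → ℤ_[2]}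
    (h : ∃ k, ¬ (2:ℤ_[2]) ∣ (G.mulVec x) k) : ∃ k, ¬ (2:ℤ_[2]) ∣ x k := by
  by_contra hc
  push_neg at hc
  obtain ⟨k, hk⟩ := h
  exact hk (mulVec_even G hc k)

lemma Qf_even_of_diag_even {G : Matrix (Fin 5) (Fin 5) ℤ_[2]} (hG : G.IsSymm)
    (hdiag : ∀ i, (2:ℤ_[2]) ∣ G i i) (x : Fin 5 → ℤ_[2]) : (2:ℤ_[2]) ∣ Qf G x := by
  rw [two_dvd_iff_toZMod]
  unfold Qf
  rw [bar_dot, bar_mulVec]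
  apply qlin_eq_zero (mbar G)
  · unfold mbar
    exact hG.map _
  · intro i
    have := (two_dvd_iff_toZMod _).mp (hdiag i)
    simpa [mbar] using this


lemma Qf_smul_two {N : ℕ} (G : Matrix (Fin N) (Fin N) ℤ_[2]) (x : Fin N → ℤ_[2]) :
    Qf G ((2:ℤ_[2]) • x) = 4 * Qf G x := by
  rw [Qf_smul]
  norm_num

lemma Bf_smul_right {N : ℕ} (G : Matrix (Fin N) (Fin N) ℤ_[2]) (c : ℤ_[2])
    (x y : Fin N → ℤ_[2]) : Bf G x (c • y) = c * Bf G x y := by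
  unfold Bf
  rw [Matrix.mulVec_smul, dotProduct_smul, smul_eq_mul]

/-- upgrade a witness with `4 ∣ Q x` and an odd coordinate of `G x` to `8 ∣ Q`. -/
lemma witness_upgrade {G : Matrix (Fin 5) (Fin 5) ℤ_[2]} (hG : G.IsSymm)
    (hdiag : ∀ i, (2:ℤ_[2]) ∣ G i i) {x : Fin 5 → ℤ_[2]} (hx : ∃ k, ¬ (2:ℤ_[2]) ∣ x k)
    (h4 : (4:ℤ_[2]) ∣ Qf G x) {k : Fin 5} (hk : ¬ (2:ℤ_[2]) ∣ (G.mulVec x) k) :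
    ∃ y : Fin 5 → ℤ_[2], (∃ k', ¬ (2:ℤ_[2]) ∣ y k') ∧ (8:ℤ_[2]) ∣ Qf G y := by
  by_cases h8 : (8:ℤ_[2]) ∣ Qf G x
  · exact ⟨x, hx, h8⟩
  · refine ⟨x + (2:ℤ_[2]) • ev k, ?_, ?_⟩
    · obtain ⟨k0, hk0⟩ := hx
      refine ⟨k0, fun hd => hk0 ?_⟩
      have hxe : x k0 = (x + (2:ℤ_[2]) • ev k) k0 - 2 * (ev k k0) := by
        simp [Pi.add_apply, Pi.smul_apply, smul_eq_mul]
      rw [hxe]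
      exact dvd_sub hd (Dvd.intro _ rfl)
    · have hq : Qf G (x + (2:ℤ_[2]) • ev k)
          = Qf G x + 4 * G k k + 4 * (G.mulVec x) k := by
        rw [Qf_add hG, Qf_smul_two, Qf_ev, Bf_smul_right, Bf_ev_right hG]
        ring
      obtain ⟨u, hu⟩ := h4
      have huo : ¬ (2:ℤ_[2]) ∣ u := by
        rintro ⟨w, rfl⟩
        exact h8 ⟨w, by rw [hu]; ring⟩
      obtain ⟨g, hg⟩ := hdiag k
      obtain ⟨w, hw⟩ := odd_add_odd huo hk
      refine ⟨w + g, ?_⟩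
      rw [hq, hu, hg]
      linear_combination (4:ℤ_[2]) * hw

lemma mulVec_double {N : ℕ} {G GH : Matrix (Fin N) (Fin N) ℤ_[2]}
    (h : ∀ i j, G i j = 2 * GH i j) (x : Fin N → ℤ_[2]) :
    G.mulVec x = (2:ℤ_[2]) • (GH.mulVec x) := by
  funext k
  simp only [Matrix.mulVec, dotProduct, Pi.smul_apply, smul_eq_mul, Finset.mul_sum]
  exact Finset.sum_congr rfl (fun j _ => by rw [h k j]; ring)

lemma Qf_double {N : ℕ} {G GH : Matrix (Fin N) (Fin N) ℤ_[2]}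
    (h : ∀ i j, G i j = 2 * GH i j) (x : Fin N → ℤ_[2]) :
    Qf G x = 2 * Qf GH x := by
  unfold Qf
  rw [mulVec_double h, dotProduct_smul, smul_eq_mul]

lemma Bf_double {N : ℕ} {G GH : Matrix (Fin N) (Fin N) ℤ_[2]}
    (h : ∀ i j, G i j = 2 * GH i j) (x y : Fin N → ℤ_[2]) :
    Bf G x y = 2 * Bf GH x y := by
  unfold Bf
  rw [mulVec_double h, dotProduct_smul, smul_eq_mul]

lemma L5 (G : Matrix (Fin 5) (Fin 5) ℤ_[2]) (hG : G.IsSymm) :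
    ∃ x : Fin 5 → ℤ_[2], (∃ k, ¬ (2:ℤ_[2]) ∣ x k) ∧
      (¬ (2:ℤ_[2]) ∣ Qf G x ∨ (8:ℤ_[2]) ∣ Qf G x) := by
  have hGsym : ∀ i j, G j i = G i j := fun i j => congrFun (congrFun hG i) j
  have hevp : ∀ i : Fin 5, ∃ k, ¬ (2:ℤ_[2]) ∣ ev (N := 5) i k :=
    fun i => ⟨i, by simpa [ev] using not_two_dvd_one⟩
  by_cases hdiag : ∃ i, ¬ (2:ℤ_[2]) ∣ G i i
  · obtain ⟨i, hi⟩ := hdiag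
    refine ⟨ev i, hevp i, Or.inl ?_⟩
    rwa [Qf_ev]
  push_neg at hdiag
  suffices h : ∃ x, (∃ k, ¬ (2:ℤ_[2]) ∣ x k) ∧ (8:ℤ_[2]) ∣ Qf G x by
    obtain ⟨x, h1, h2⟩ := h; exact ⟨x, h1, Or.inr h2⟩
  by_cases hWex : ∃ x : Fin 5 → ℤ_[2], (∃ k, ¬ (2:ℤ_[2]) ∣ x k) ∧ ((4:ℤ_[2]) ∣ Qf G x ∧
      ∃ k, ¬ (2:ℤ_[2]) ∣ (G.mulVec x) k)
  · obtain ⟨x, hx, h4, k, hk⟩ := hWex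
    exact witness_upgrade hG hdiag hx h4 hk
  push_neg at hWex
  -- hWex : ∀ x, prim → 4 ∣ Q x → ∀ k, 2 ∣ (G x) k
  by_cases hall : ∀ i j, (2:ℤ_[2]) ∣ G i j
  · -- Case B1 : all entries even
    have hhalf : ∀ i j, ∃ c, G i j = 2 * c := fun i j => hall i j
    choose G2 hG2 using hhalf
    have hG2sym : ∀ i j, G2 i j = G2 j i := by
      intro i j
      apply mul_left_cancel₀ two_ne_zero'
      rw [← hG2 i j, ← hG2 j i, hGsym]
    set GH : Matrix (Fin 5) (Fin 5) ℤ_[2] := Matrix.of (fun i j => G2 i j) with hGH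
    have hGHh : ∀ i j, G i j = 2 * GH i j := fun i j => hG2 i j
    set M2 : Matrix (Fin 5) (Fin 5) (ZMod 2) := mbar GH with hM2
    have hM2s : M2.IsSymm := by
      apply Matrix.IsSymm.ext
      intro i j
      simp only [hM2, mbar, Matrix.map_apply, hGH, Matrix.of_apply]
      rw [hG2sym j i]
    set f := LinearMap.pi ![qlin M2 hM2s, 0] with hf
    obtain ⟨rb, hli, hker⟩ := exists_indep_triple f
    set r : Fin 3 → (Fin 5 → ℤ_[2]) := fun a i => lift2 (rb a i) with hrdef
    have hr : ∀ a, bar (r a) = rb a := by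
      intro a; funext i; simp [bar, hrdef, toZMod_lift2]
    refine p_lemma hG rb hli r hr ?_ ?_
    · intro a
      have hq0 : qlin M2 hM2s (rb a) = 0 := by
        have := congrFun (congrArg (fun v => (v : Fin 2 → ZMod 2)) (hker a)) 0
        simpa [hf, LinearMap.pi_apply] using this
      have h2d : (2:ℤ_[2]) ∣ Qf GH (r a) := by
        rw [two_dvd_iff_toZMod]
        unfold Qf
        rw [bar_dot, bar_mulVec, hr a]
        exact hq0
      obtain ⟨c, hc⟩ := h2d
      rw [Qf_double hGHh, hc]
      exact ⟨c, by ring⟩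
    · intro a b _
      rw [Bf_double hGHh]
      exact dvd_mul_right _ _
  · -- Case B2 : some off-diagonal entry odd
    push_neg at hall
    obtain ⟨i0, j0, hodd⟩ := hall
    have hoddji : ¬ (2:ℤ_[2]) ∣ G j0 i0 := by rwa [hGsym]
    set Gb := mbar G with hGbdef
    have hg : ∃ g, G i0 i0 = 2 * g ∧ ¬ (2:ℤ_[2]) ∣ g := by
      obtain ⟨g, hgg⟩ := hdiag i0
      refine ⟨g, hgg, fun h2 => ?_⟩
      obtain ⟨w, rfl⟩ := h2
      have h4 : (4:ℤ_[2]) ∣ Qf G (ev i0) := by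
        rw [Qf_ev, hgg]; exact ⟨w, by ring⟩
      have := hWex (ev i0) (hevp i0) h4 j0
      rw [mulVec_ev] at this
      exact hoddji this
    obtain ⟨g, hgg, hgo⟩ := hg
    -- the two key consequences of ¬ hWex
    have step1 : ∀ xb : Fin 5 → ZMod 2, (Gb.mulVec xb) i0 = 0 → (Gb.mulVec xb) j0 = 0 →
        Gb.mulVec xb = 0 := by
      intro xb h0 h1
      by_contra hne
      have hk : ∃ k, (Gb.mulVec xb) k ≠ 0 := by
        by_contra hc; push_neg at hc; exact hne (funext hc)
      obtain ⟨k, hk⟩ := hk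
      set rr : Fin 5 → ℤ_[2] := fun i => lift2 (xb i) with hrr
      have hbr : bar rr = xb := by funext i; simp [bar, hrr, toZMod_lift2]
      have hbGr : bar (G.mulVec rr) = Gb.mulVec xb := by rw [bar_mulVec, hbr]
      have hGrk : ¬ (2:ℤ_[2]) ∣ (G.mulVec rr) k := by
        rw [two_dvd_iff_toZMod]
        intro hz
        exact hk (by rw [← hbGr]; exact hz)
      have hGri0 : (2:ℤ_[2]) ∣ (G.mulVec rr) i0 := by
        rw [two_dvd_iff_toZMod]
        rw [show PadicInt.toZMod ((G.mulVec rr) i0) = bar (G.mulVec rr) i0 from rfl, hbGr]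
        exact h0
      have hGrj0 : (2:ℤ_[2]) ∣ (G.mulVec rr) j0 := by
        rw [two_dvd_iff_toZMod]
        rw [show PadicInt.toZMod ((G.mulVec rr) j0) = bar (G.mulVec rr) j0 from rfl, hbGr]
        exact h1
      have hprim : ∃ k', ¬ (2:ℤ_[2]) ∣ rr k' := prim_of_mulVec_odd ⟨k, hGrk⟩
      have h4n : ¬ (4:ℤ_[2]) ∣ Qf G rr := fun h4 => hGrk (hWex rr hprim h4 k)
      obtain ⟨q, hq⟩ := Qf_even_of_diag_even hG hdiag rr
      have hqo : ¬ (2:ℤ_[2]) ∣ q := by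
        rintro ⟨w, rfl⟩; exact h4n ⟨w, by rw [hq]; ring⟩
      obtain ⟨w, hw⟩ := hGri0
      obtain ⟨w2, hw2⟩ := odd_add_odd hqo hgo
      have hy4 : (4:ℤ_[2]) ∣ Qf G (rr + ev i0) := by
        rw [Qf_add_ev hG, hq, hgg, hw]
        exact ⟨w2 + w, by linear_combination (2:ℤ_[2]) * hw2⟩
      have hyodd : ¬ (2:ℤ_[2]) ∣ (G.mulVec (rr + ev i0)) j0 := by
        rw [Matrix.mulVec_add]
        show ¬ (2:ℤ_[2]) ∣ ((G.mulVec rr) j0 + (G.mulVec (ev i0)) j0)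
        rw [mulVec_ev]
        exact even_add_odd hGrj0 hoddji
      have hyprim : ∃ k', ¬ (2:ℤ_[2]) ∣ (rr + ev i0) k' := prim_of_mulVec_odd ⟨j0, hyodd⟩
      exact hyodd (hWex _ hyprim hy4 j0)
    have step2 : ∀ xb : Fin 5 → ZMod 2, (Gb.mulVec xb) i0 = 0 → (Gb.mulVec xb) j0 = 0 →
        (4:ℤ_[2]) ∣ Qf G (fun i => lift2 (xb i)) := by
      intro xb h0 h1
      have hR := step1 xb h0 h1
      set rr : Fin 5 → ℤ_[2] := fun i => lift2 (xb i) with hrr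
      have hbr : bar rr = xb := by funext i; simp [bar, hrr, toZMod_lift2]
      have hbGr : bar (G.mulVec rr) = Gb.mulVec xb := by rw [bar_mulVec, hbr]
      have hGrall : ∀ k', (2:ℤ_[2]) ∣ (G.mulVec rr) k' := by
        intro k'
        rw [two_dvd_iff_toZMod]
        rw [show PadicInt.toZMod ((G.mulVec rr) k') = bar (G.mulVec rr) k' from rfl, hbGr, hR]
        rfl
      by_contra h4n
      obtain ⟨q, hq⟩ := Qf_even_of_diag_even hG hdiag rr
      have hqo : ¬ (2:ℤ_[2]) ∣ q := by
        rintro ⟨w, rfl⟩; exact h4n ⟨w, by rw [hq]; ring⟩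
      obtain ⟨w, hw⟩ := hGrall i0
      obtain ⟨w2, hw2⟩ := odd_add_odd hqo hgo
      have hy4 : (4:ℤ_[2]) ∣ Qf G (rr + ev i0) := by
        rw [Qf_add_ev hG, hq, hgg, hw]
        exact ⟨w2 + w, by linear_combination (2:ℤ_[2]) * hw2⟩
      have hyodd : ¬ (2:ℤ_[2]) ∣ (G.mulVec (rr + ev i0)) j0 := by
        rw [Matrix.mulVec_add]
        show ¬ (2:ℤ_[2]) ∣ ((G.mulVec rr) j0 + (G.mulVec (ev i0)) j0)
        rw [mulVec_ev]
        exact even_add_odd (hGrall j0) hoddji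
      have hyprim : ∃ k', ¬ (2:ℤ_[2]) ∣ (rr + ev i0) k' := prim_of_mulVec_odd ⟨j0, hyodd⟩
      exact hyodd (hWex _ hyprim hy4 j0)
    set f := LinearMap.pi
      ![(LinearMap.proj i0).comp Gb.mulVecLin, (LinearMap.proj j0).comp Gb.mulVecLin] with hf
    obtain ⟨rb, hli, hker⟩ := exists_indep_triple f
    have hcomp : ∀ a, (Gb.mulVec (rb a)) i0 = 0 ∧ (Gb.mulVec (rb a)) j0 = 0 := by
      intro a
      constructor
      · have := congrFun (congrArg (fun v => (v : Fin 2 → ZMod 2)) (hker a)) 0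
        simpa [hf, LinearMap.pi_apply, Matrix.mulVecLin_apply] using this
      · have := congrFun (congrArg (fun v => (v : Fin 2 → ZMod 2)) (hker a)) 1
        simpa [hf, LinearMap.pi_apply, Matrix.mulVecLin_apply] using this
    set r : Fin 3 → (Fin 5 → ℤ_[2]) := fun a i => lift2 (rb a i) with hrdef
    have hr : ∀ a, bar (r a) = rb a := by
      intro a; funext i; simp [bar, hrdef, toZMod_lift2]
    refine p_lemma hG rb hli r hr ?_ ?_
    · intro a
      exact step2 (rb a) (hcomp a).1 (hcomp a).2
    · intro a b _
      have hz := step1 (rb b) (hcomp b).1 (hcomp b).2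
      have : PadicInt.toZMod (Bf G (r a) (r b)) = 0 := by
        unfold Bf
        rw [bar_dot, bar_mulVec, hr a, hr b, hz, dotProduct_zero]
      rw [two_dvd_iff_toZMod]
      exact this

lemma primRep_congr {Rg : Type*} [CommRing Rg] {ι κ : Type*} [Fintype ι] [Fintype κ]
    [DecidableEq κ] {G : Matrix κ κ Rg} {H : Matrix ι ι Rg} {U W : Matrix κ κ Rg}
    (hUW : U * W = 1) (h : PrimRep (Uᵀ * G * U) H) : PrimRep G H := by
  obtain ⟨T, hT, P, hP⟩ := h
  refine ⟨T * W, ?_, U * P, ?_⟩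
  · have hWU : Wᵀ * Uᵀ = 1 := by
      rw [← Matrix.transpose_mul, hUW, Matrix.transpose_one]
    calc (T * W)ᵀ * H * (T * W) = Wᵀ * (Tᵀ * H * T) * W := by
          rw [Matrix.transpose_mul]; simp only [Matrix.mul_assoc]
      _ = Wᵀ * (Uᵀ * G * U) * W := by rw [hT]
      _ = (Wᵀ * Uᵀ) * G * (U * W) := by simp only [Matrix.mul_assoc]
      _ = G := by rw [hWU, hUW, Matrix.one_mul, Matrix.mul_one]
  · calc (U * P) * (T * W) = U * ((P * T) * W) := by simp only [Matrix.mul_assoc]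
      _ = 1 := by rw [hP, Matrix.one_mul, hUW]

/-- complete a primitive vector to an invertible matrix having it as a given column. -/
lemma complete_primitive {n : ℕ} (x : Fin n → ℤ_[2]) {k : Fin n} (hk : IsUnit (x k))
    (i0 : Fin n) :
    ∃ U W : Matrix (Fin n) (Fin n) ℤ_[2], U * W = 1 ∧ ∀ j, U j i0 = x j := by
  set V : Matrix (Fin n) (Fin n) ℤ_[2] := (1 : Matrix (Fin n) (Fin n) ℤ_[2]).updateCol k x
    with hV
  have hdet : IsUnit V.det := by
    have : V.det = Matrix.cramer (1 : Matrix (Fin n) (Fin n) ℤ_[2]) x k := by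
      rw [Matrix.cramer_apply]
    rw [this, Matrix.cramer_one]
    exact hk
  set σ := Equiv.swap i0 k with hσ
  refine ⟨V.submatrix id σ, V⁻¹.submatrix σ id, ?_, ?_⟩
  · rw [Matrix.submatrix_mul_equiv, Matrix.mul_nonsing_inv _ hdet, Matrix.submatrix_id_id]
  · intro j
    have : σ i0 = k := Equiv.swap_apply_left i0 k
    simp only [Matrix.submatrix_apply, id_eq, this]
    exact Matrix.updateCol_self

lemma hyp_sum (m : ℕ) (x y : ((Fin m × Fin 2) ⊕ Fin 2) → ℤ_[2]) :
    (∑ q, (∑ p, x p * (Matrix.fromBlocks (HypN ℤ_[2] m) 0 0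
        (!![1, 0; 0, -1] : Matrix (Fin 2) (Fin 2) ℤ_[2])) p q) * y q)
      = (∑ k : Fin m, (x (.inl (k,0)) * y (.inl (k,1)) + x (.inl (k,1)) * y (.inl (k,0))))
        + (x (.inr 0) * y (.inr 0) - x (.inr 1) * y (.inr 1)) := by
  simp only [Fintype.sum_sum_type, Fintype.sum_prod_type, Fin.sum_univ_two,
    Matrix.fromBlocks_apply₁₁, Matrix.fromBlocks_apply₁₂, Matrix.fromBlocks_apply₂₁,
    Matrix.fromBlocks_apply₂₂, HypN, Matrix.zero_apply, mul_zero, zero_mul,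
    add_zero, zero_add, Matrix.cons_val', Matrix.cons_val_zero, Matrix.cons_val_one,
    Matrix.head_cons, Matrix.head_fin_const, Matrix.empty_val', Matrix.cons_val_fin_one]
  simp only [ne_eq, zero_ne_one, one_ne_zero, not_false_eq_true, not_true_eq_false,
    and_true, and_false, if_false, ite_false, mul_ite, mul_one, mul_zero,
    Finset.sum_ite_eq', Finset.mem_univ, if_true, Finset.sum_const_zero, zero_add, add_zero]
  norm_num [Matrix.cons_val_zero, Matrix.cons_val_one, Matrix.head_cons]
  rw [show (∑ k : Fin m, (x (Sum.inl (k, 1)) * y (Sum.inl (k, 0)) +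
      x (Sum.inl (k, 0)) * y (Sum.inl (k, 1))))
      = ∑ k : Fin m, (x (Sum.inl (k, 0)) * y (Sum.inl (k, 1)) +
        x (Sum.inl (k, 1)) * y (Sum.inl (k, 0))) from
    Finset.sum_congr rfl (fun k _ => by ring)]
  ring

lemma quad_helper (a b ee Si Sj Ci Cj : ℤ_[2]) (hab1 : a - b = 1) (hab2 : a + b = ee) :
    (Si + Ci * a) * (Sj + Cj * a) - (Si + Ci * b) * (Sj + Cj * b)
      = Si * Cj + Sj * Ci + ee * (Ci * Cj) := by
  linear_combination (Si*Cj + Sj*Ci + Ci*Cj*(a+b)) * hab1 + (Ci*Cj) * hab2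

lemma exists_sc {g : ℤ_[2]} (hgood : ¬ (2:ℤ_[2]) ∣ g ∨ (8:ℤ_[2]) ∣ g) :
    ∃ ee c s : ℤ_[2], 2*s*c + ee*c^2 = g ∧ ¬ (2:ℤ_[2]) ∣ ee ∧ ((c = 1 ∧ s = 0) ∨ IsUnit s) := by
  rcases hgood with h | ⟨h8, hh⟩
  · exact ⟨g, 1, 0, by ring, h, Or.inl ⟨rfl, rfl⟩⟩
  · refine ⟨1, 2, 2*h8 - 1, by rw [hh]; ring, not_two_dvd_one, Or.inr ?_⟩
    apply isUnit_of_not_two_dvd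
    rintro ⟨w, hw⟩
    exact not_two_dvd_one ⟨h8 - w, by linear_combination -hw⟩

lemma construct (m : ℕ) (G' : Matrix (Fin (m+1)) (Fin (m+1)) ℤ_[2]) (hsym : G'.IsSymm)
    (hgood : ¬ (2:ℤ_[2]) ∣ G' (Fin.last m) (Fin.last m)
      ∨ (8:ℤ_[2]) ∣ G' (Fin.last m) (Fin.last m)) :
    PrimRep G' (Matrix.fromBlocks (HypN ℤ_[2] m) 0 0
      (!![1, 0; 0, -1] : Matrix (Fin 2) (Fin 2) ℤ_[2])) := by
  have hGsym : ∀ i j, G' j i = G' i j := fun i j => congrFun (congrFun hsym i) j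
  obtain ⟨ee, c, s, hmain, heodd, hcs⟩ := exists_sc hgood
  have hzmod1 : ∀ v : ZMod 2, v ≠ 0 → v = 1 := by decide
  have hee1 : PadicInt.toZMod ee = 1 := by
    apply hzmod1
    intro h0
    exact heodd ((two_dvd_iff_toZMod ee).mpr h0)
  obtain ⟨a, ha⟩ : ∃ a, ee + 1 = 2 * a := by
    have h2 : (2:ℤ_[2]) ∣ (ee + 1) := by
      rw [two_dvd_iff_toZMod, map_add, _root_.map_one, hee1]
      decide
    exact h2
  set b := a - 1 with hb
  have hab1 : a - b = 1 := by rw [hb]; ring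
  have hab2 : a + b = ee := by rw [hb]; linear_combination -ha
  have hD : ∀ z : ℤ_[2], ∃ d, z - ee * z^2 = 2 * d := by
    intro z
    have h2 : (2:ℤ_[2]) ∣ (z - ee * z^2) := by
      rw [two_dvd_iff_toZMod, _root_.map_sub, _root_.map_mul, _root_.map_pow, hee1]
      have hz : ∀ v : ZMod 2, v - 1 * v^2 = 0 := by decide
      rw [hz]
    exact h2
  choose D hDspec using hD
  set L := Fin.last m with hLdef
  set t : Fin (m+1) → ℤ_[2] := fun i => if i = L then c else G' i i with ht
  set C : Fin (m+1) → Fin (m+1) → ℤ_[2] := fun i j =>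
    if i = L then (if j = L then c else G' L j - s * t j - ee * (t j) * c)
    else if j = L then t i
    else if i = j then D (G' i i)
    else if i < j then G' i j - ee * t i * t j
    else 0 with hC
  set S : Fin (m+1) → ℤ_[2] := fun i => if i = L then s else 0 with hS
  set T : Matrix ((Fin m × Fin 2) ⊕ Fin 2) (Fin (m+1)) ℤ_[2] := fun p j =>
    Sum.elim
      (fun kt : Fin m × Fin 2 => if kt.2 = 0 then (if j = Fin.castSucc kt.1 then 1 else 0)
        else C j (Fin.castSucc kt.1))
      (fun t2 : Fin 2 => S j + C j L * (if t2 = 0 then a else b)) p with hTdef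
  have hcsL : ∀ k : Fin m, Fin.castSucc k ≠ L := fun k => (Fin.castSucc_lt_last k).ne
  have hCiL : ∀ i, C i L = t i := by
    intro i
    by_cases hi : i = L
    · subst hi; simp [hC, ht]
    · simp [hC, hi]
  have hCLL : C L L = c := by simp [hC, ht]
  have hSL : S L = s := by simp [hS]
  have htL : t L = c := by simp [ht]
  have hScs : ∀ k : Fin m, S (Fin.castSucc k) = 0 := fun k => by simp [hS, hcsL k]
  have htcs : ∀ k : Fin m, t (Fin.castSucc k) = G' (Fin.castSucc k) (Fin.castSucc k) :=
    fun k => by simp [ht, hcsL k]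
  have hCLcs : ∀ l0 : Fin m, C L (Fin.castSucc l0)
      = G' L (Fin.castSucc l0) - s * t (Fin.castSucc l0)
        - ee * (t (Fin.castSucc l0)) * c := by
    intro l0
    rw [hC]
    simp [hcsL l0]
  -- entry lemmas for T
  have hTl0 : ∀ (k : Fin m) (j' : Fin (m+1)),
      T (.inl (k, 0)) j' = (if j' = Fin.castSucc k then 1 else 0) := by
    intro k j'; rw [hTdef]; norm_num
  have hTl1 : ∀ (k : Fin m) (j' : Fin (m+1)),
      T (.inl (k, 1)) j' = C j' (Fin.castSucc k) := by
    intro k j'; rw [hTdef]; norm_num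
  have hTr0 : ∀ (j' : Fin (m+1)), T (.inr 0) j' = S j' + C j' L * a := by
    intro j'; rw [hTdef]; norm_num
  have hTr1 : ∀ (j' : Fin (m+1)), T (.inr 1) j' = S j' + C j' L * b := by
    intro j'; rw [hTdef]; norm_num
  -- collapse lemmas
  have hcol0 : ∀ (f : Fin m → ℤ_[2]),
      (∑ k, (if (L : Fin (m+1)) = Fin.castSucc k then (1:ℤ_[2]) else 0) * f k) = 0 :=
    fun f => Finset.sum_eq_zero (fun k _ => by rw [if_neg (Ne.symm (hcsL k)), zero_mul])
  have hcol0' : ∀ (f : Fin m → ℤ_[2]),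
      (∑ k, f k * (if (L : Fin (m+1)) = Fin.castSucc k then (1:ℤ_[2]) else 0)) = 0 :=
    fun f => Finset.sum_eq_zero (fun k _ => by rw [if_neg (Ne.symm (hcsL k)), mul_zero])
  have hcol1 : ∀ (k0 : Fin m) (f : Fin m → ℤ_[2]),
      (∑ k, (if Fin.castSucc k0 = Fin.castSucc k then (1:ℤ_[2]) else 0) * f k) = f k0 := by
    intro k0 f
    calc (∑ k, (if Fin.castSucc k0 = Fin.castSucc k then (1:ℤ_[2]) else 0) * f k)
        = ∑ k, (if k0 = k then f k else 0) := Finset.sum_congr rfl (fun k _ => by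
          simp only [Fin.castSucc_inj]
          by_cases h : k0 = k <;> simp [h])
      _ = f k0 := by rw [Finset.sum_ite_eq]; simp
  have hcol1' : ∀ (k0 : Fin m) (f : Fin m → ℤ_[2]),
      (∑ k, f k * (if Fin.castSucc k0 = Fin.castSucc k then (1:ℤ_[2]) else 0)) = f k0 := by
    intro k0 f
    calc (∑ k, f k * (if Fin.castSucc k0 = Fin.castSucc k then (1:ℤ_[2]) else 0))
        = ∑ k, (if k0 = k then f k else 0) := Finset.sum_congr rfl (fun k _ => by
          simp only [Fin.castSucc_inj]
          by_cases h : k0 = k <;> simp [h])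
      _ = f k0 := by rw [Finset.sum_ite_eq]; simp
  -- the Gram identity
  have hgram : Tᵀ * (Matrix.fromBlocks (HypN ℤ_[2] m) 0 0
      (!![1, 0; 0, -1] : Matrix (Fin 2) (Fin 2) ℤ_[2])) * T = G' := by
    ext i j
    simp only [Matrix.mul_apply, Matrix.transpose_apply]
    rw [hyp_sum m (fun p => T p i) (fun p => T p j)]
    simp only [hTl0, hTl1, hTr0, hTr1]
    rw [quad_helper a b ee (S i) (S j) (C i L) (C j L) hab1 hab2]
    rw [Finset.sum_add_distrib]
    induction i using Fin.lastCases with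
    | last =>
      rw [← hLdef]
      induction j using Fin.lastCases with
      | last =>
        rw [← hLdef, hcol0 (fun k => C L (Fin.castSucc k)),
          hcol0' (fun k => C L (Fin.castSucc k)), hSL, hCLL]
        linear_combination hmain
      | cast l0 =>
        rw [hcol0 (fun k => C (Fin.castSucc l0) (Fin.castSucc k)),
          hcol1' l0 (fun k => C L (Fin.castSucc k)), hSL, hScs l0, hCLL, hCiL, hCLcs l0]
        ring
    | cast k0 =>
      induction j using Fin.lastCases with
      | last =>
        rw [← hLdef, hcol1 k0 (fun k => C L (Fin.castSucc k)),
          hcol0' (fun k => C (Fin.castSucc k0) (Fin.castSucc k)), hScs k0, hSL,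
          hCLL, hCiL, hCLcs k0]
        linear_combination hGsym (Fin.castSucc k0) L
      | cast l0 =>
        rw [hcol1 k0 (fun k => C (Fin.castSucc l0) (Fin.castSucc k)),
          hcol1' l0 (fun k => C (Fin.castSucc k0) (Fin.castSucc k)),
          hScs k0, hScs l0, hCiL, hCiL]
        rcases lt_trichotomy k0 l0 with h | h | h
        · have e1 : C (Fin.castSucc l0) (Fin.castSucc k0) = 0 := by
            rw [hC]
            simp [hcsL l0, hcsL k0, Fin.castSucc_inj, h.ne', Fin.castSucc_lt_castSucc_iff,
              not_lt.mpr h.le]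
          have e2 : C (Fin.castSucc k0) (Fin.castSucc l0)
              = G' (Fin.castSucc k0) (Fin.castSucc l0)
                - ee * t (Fin.castSucc k0) * t (Fin.castSucc l0) := by
            rw [hC]
            simp [hcsL l0, hcsL k0, Fin.castSucc_inj, h.ne, Fin.castSucc_lt_castSucc_iff, h]
          rw [e1, e2]
          ring
        · subst h
          have e1 : C (Fin.castSucc k0) (Fin.castSucc k0) = D (G' (Fin.castSucc k0) (Fin.castSucc k0)) := by
            rw [hC]
            simp [hcsL k0]
          rw [e1, htcs k0]
          linear_combination (-1 : ℤ_[2]) * hDspec (G' (Fin.castSucc k0) (Fin.castSucc k0))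
        · have e1 : C (Fin.castSucc l0) (Fin.castSucc k0)
              = G' (Fin.castSucc l0) (Fin.castSucc k0)
                - ee * t (Fin.castSucc l0) * t (Fin.castSucc k0) := by
            rw [hC]
            simp [hcsL l0, hcsL k0, Fin.castSucc_inj, h.ne, Fin.castSucc_lt_castSucc_iff, h]
          have e2 : C (Fin.castSucc k0) (Fin.castSucc l0) = 0 := by
            rw [hC]
            simp [hcsL l0, hcsL k0, Fin.castSucc_inj, h.ne', Fin.castSucc_lt_castSucc_iff,
              not_lt.mpr h.le]
          rw [e1, e2]
          linear_combination hGsym (Fin.castSucc k0) (Fin.castSucc l0)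
  refine ⟨T, hgram, ?_⟩
  -- the left inverse
  have hstd : ∀ (i : Fin (m+1)), i ≠ L → ∀ j : Fin (m+1),
      (∑ k : Fin m, (if i = Fin.castSucc k then (1:ℤ_[2]) else 0)
        * (if j = Fin.castSucc k then 1 else 0))
        = (1 : Matrix (Fin (m+1)) (Fin (m+1)) ℤ_[2]) i j := by
    intro i hi j
    obtain ⟨k0, hk0⟩ := Fin.exists_castSucc_eq.mpr hi
    rw [← hk0]
    rw [hcol1 k0 (fun k => if j = Fin.castSucc k then (1:ℤ_[2]) else 0)]
    by_cases hj2 : j = Fin.castSucc k0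
    · rw [if_pos hj2, hj2, Matrix.one_apply_eq]
    · rw [if_neg hj2, Matrix.one_apply_ne (fun hh => hj2 hh.symm)]
  rcases hcs with ⟨hc1, hs0⟩ | hsu
  · -- c = 1, s = 0 : read off the f_L coefficient
    set P : Matrix (Fin (m+1)) ((Fin m × Fin 2) ⊕ Fin 2) ℤ_[2] := fun i p =>
      if i = L then
        Sum.elim (fun kt : Fin m × Fin 2 => if kt.2 = 0 then -(t (Fin.castSucc kt.1)) else 0)
          (fun t2 : Fin 2 => if t2 = 0 then 1 else -1) p
      else
        Sum.elim (fun kt : Fin m × Fin 2 =>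
            if kt.2 = 0 then (if i = Fin.castSucc kt.1 then 1 else 0) else 0)
          (fun _ => 0) p
      with hP
    have hPl0L : ∀ k : Fin m, P L (.inl (k, 0)) = -(t (Fin.castSucc k)) := by
      intro k; rw [hP]; norm_num
    have hPl1L : ∀ k : Fin m, P L (.inl (k, 1)) = 0 := by
      intro k; rw [hP]; norm_num
    have hPr0L : P L (.inr 0) = 1 := by rw [hP]; norm_num
    have hPr1L : P L (.inr 1) = -1 := by rw [hP]; norm_num
    have hPl0n : ∀ i : Fin (m+1), i ≠ L → ∀ k : Fin m,
        P i (.inl (k, 0)) = (if i = Fin.castSucc k then 1 else 0) := by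
      intro i hi k; rw [hP]; simp [hi]
    have hPl1n : ∀ i : Fin (m+1), i ≠ L → ∀ k : Fin m, P i (.inl (k, 1)) = 0 := by
      intro i hi k; rw [hP]; simp [hi]
    have hPr0n : ∀ i : Fin (m+1), i ≠ L → P i (.inr 0) = 0 := by
      intro i hi; rw [hP]; simp [hi]
    have hPr1n : ∀ i : Fin (m+1), i ≠ L → P i (.inr 1) = 0 := by
      intro i hi; rw [hP]; simp [hi]
    refine ⟨P, ?_⟩
    ext i j
    rw [Matrix.mul_apply, Fintype.sum_sum_type, Fintype.sum_prod_type]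
    simp only [Fin.sum_univ_two]
    by_cases hi : i = L
    · subst hi
      simp only [hPl0L, hPl1L, hPr0L, hPr1L, hTl0, hTl1, hTr0, hTr1, zero_mul, add_zero,
        one_mul]
      by_cases hj : j = L
      · subst hj
        rw [hcol0' (fun k => -t (Fin.castSucc k)), hSL, hCiL, htL, hc1, hs0,
          Matrix.one_apply_eq]
        linear_combination hab1
      · obtain ⟨l0, hl0⟩ := Fin.exists_castSucc_eq.mpr hj
        rw [← hl0]
        rw [hcol1' l0 (fun k => -t (Fin.castSucc k)), hCiL, hScs l0,
          Matrix.one_apply_ne (fun hh => hj (by rw [← hl0, ← hh]))]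
        linear_combination t (Fin.castSucc l0) * hab1
    · simp only [hPl0n i hi, hPl1n i hi, hPr0n i hi, hPr1n i hi, zero_mul, add_zero,
        zero_add, hTl0]
      exact hstd i hi j
  · -- s is a unit : read off the e_L coefficient
    set P : Matrix (Fin (m+1)) ((Fin m × Fin 2) ⊕ Fin 2) ℤ_[2] := fun i p =>
      if i = L then
        Sum.elim (fun _ : Fin m × Fin 2 => 0)
          (fun t2 : Fin 2 => if t2 = 0 then -(Ring.inverse s) * b else (Ring.inverse s) * a) p
      else
        Sum.elim (fun kt : Fin m × Fin 2 =>
            if kt.2 = 0 then (if i = Fin.castSucc kt.1 then 1 else 0) else 0)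
          (fun _ => 0) p
      with hP
    have hPl0L : ∀ k : Fin m, P L (.inl (k, 0)) = 0 := by
      intro k; rw [hP]; norm_num
    have hPl1L : ∀ k : Fin m, P L (.inl (k, 1)) = 0 := by
      intro k; rw [hP]; norm_num
    have hPr0L : P L (.inr 0) = -(Ring.inverse s) * b := by rw [hP]; norm_num
    have hPr1L : P L (.inr 1) = (Ring.inverse s) * a := by rw [hP]; norm_num
    have hPl0n : ∀ i : Fin (m+1), i ≠ L → ∀ k : Fin m,
        P i (.inl (k, 0)) = (if i = Fin.castSucc k then 1 else 0) := by
      intro i hi k; rw [hP]; simp [hi]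
    have hPl1n : ∀ i : Fin (m+1), i ≠ L → ∀ k : Fin m, P i (.inl (k, 1)) = 0 := by
      intro i hi k; rw [hP]; simp [hi]
    have hPr0n : ∀ i : Fin (m+1), i ≠ L → P i (.inr 0) = 0 := by
      intro i hi; rw [hP]; simp [hi]
    have hPr1n : ∀ i : Fin (m+1), i ≠ L → P i (.inr 1) = 0 := by
      intro i hi; rw [hP]; simp [hi]
    refine ⟨P, ?_⟩
    ext i j
    rw [Matrix.mul_apply, Fintype.sum_sum_type, Fintype.sum_prod_type]
    simp only [Fin.sum_univ_two]
    by_cases hi : i = L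
    · subst hi
      simp only [hPl0L, hPl1L, hPr0L, hPr1L, hTr0, hTr1, zero_mul, add_zero,
        Finset.sum_const_zero, zero_add]
      have hinv : Ring.inverse s * s = 1 := Ring.inverse_mul_cancel s hsu
      by_cases hj : j = L
      · subst hj
        rw [hSL, hCLL, Matrix.one_apply_eq]
        linear_combination (Ring.inverse s * s) * hab1 + hinv - hab1
      · obtain ⟨l0, hl0⟩ := Fin.exists_castSucc_eq.mpr hj
        rw [← hl0]
        rw [hScs l0, Matrix.one_apply_ne (fun hh => hj (by rw [← hl0, ← hh]))]
        ring
    · simp only [hPl0n i hi, hPl1n i hi, hPr0n i hi, hPr1n i hi, zero_mul, add_zero,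
        zero_add, hTl0]
      exact hstd i hi j

lemma conj_isSymm {n : ℕ} {G U : Matrix (Fin n) (Fin n) ℤ_[2]} (hG : G.IsSymm) :
    (Uᵀ * G * U).IsSymm := by
  show (Uᵀ * G * U)ᵀ = Uᵀ * G * U
  rw [Matrix.transpose_mul, Matrix.transpose_mul, Matrix.transpose_transpose, hG,
    Matrix.mul_assoc]

lemma conj_corner {n : ℕ} (G U : Matrix (Fin n) (Fin n) ℤ_[2]) (i0 : Fin n)
    (x : Fin n → ℤ_[2]) (hU : ∀ j, U j i0 = x j) :
    (Uᵀ * G * U) i0 i0 = Qf G x := by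
  calc (Uᵀ * G * U) i0 i0 = ∑ q, (∑ p, x p * G p q) * x q := by
        simp [Matrix.mul_apply, Matrix.transpose_apply, hU]
    _ = ∑ q, ∑ p, x p * G p q * x q :=
        Finset.sum_congr rfl (fun q _ => Finset.sum_mul _ _ _)
    _ = ∑ p, ∑ q, x p * G p q * x q := Finset.sum_comm
    _ = ∑ p, x p * ∑ q, G p q * x q := by
        apply Finset.sum_congr rfl
        intro p _
        rw [Finset.mul_sum]
        apply Finset.sum_congr rfl
        intro q _
        ring
    _ = Qf G x := rfl

end PU

open PU in
/-- For every `n ≥ 5`, the `ℤ₂`-lattice `ℍ^(n-1) ⊥ ⟨1,-1⟩` is primitively `n`-universal. -/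
theorem HypN_perp_one_neg_one_primitively_universal
    (n : ℕ) (hn : 5 ≤ n) (G : Matrix (Fin n) (Fin n) ℤ_[2])
    (hG : G.IsSymm) (hdet : G.det ≠ 0) :
    PrimRep G (Matrix.fromBlocks (HypN ℤ_[2] (n - 1)) 0 0
      (!![1, 0; 0, -1] : Matrix (Fin 2) (Fin 2) ℤ_[2])) := by
  obtain ⟨m, rfl⟩ : ∃ m, n = m + 1 := ⟨n - 1, by omega⟩
  have h5 : (5:ℕ) ≤ m + 1 := hn
  set E : Fin 5 → Fin (m+1) := Fin.castLE h5 with hE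
  have hEinj : Function.Injective E := Fin.castLE_injective h5
  set G5 : Matrix (Fin 5) (Fin 5) ℤ_[2] := G.submatrix E E with hG5
  have hG5s : G5.IsSymm := by
    show G5ᵀ = G5
    rw [hG5, Matrix.transpose_submatrix, hG]
  obtain ⟨x5, ⟨k5, hk5⟩, hval⟩ := L5 G5 hG5s
  set x : Fin (m+1) → ℤ_[2] := fun p => if h : (p:ℕ) < 5 then x5 ⟨p, h⟩ else 0 with hx
  have hxE : ∀ i : Fin 5, x (E i) = x5 i := by
    intro i
    rw [hx]
    dsimp only
    rw [dif_pos (by rw [hE]; exact i.isLt)]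
    congr 1
  have hx0 : ∀ p : Fin (m+1), (∀ i : Fin 5, p ≠ E i) → x p = 0 := by
    intro p hp
    rw [hx]
    dsimp only
    rw [dif_neg]
    intro h
    exact hp ⟨p.val, h⟩ (by rw [hE]; exact Fin.ext rfl)
  have hsum5 : ∀ f : Fin (m+1) → ℤ_[2], (∀ p, (∀ i : Fin 5, p ≠ E i) → f p = 0) →
      ∑ p, f p = ∑ i : Fin 5, f (E i) := by
    intro f hf
    have h1 : ∑ p ∈ Finset.univ.image E, f p = ∑ i : Fin 5, f (E i) :=
      Finset.sum_image (fun a _ b _ hab => hEinj hab)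
    rw [← h1]
    refine (Finset.sum_subset (Finset.subset_univ _) ?_).symm
    intro p _ hp
    apply hf
    intro i hi
    exact hp (Finset.mem_image.mpr ⟨i, Finset.mem_univ i, hi.symm⟩)
  have hmv : ∀ p, (G.mulVec x) p = ∑ i : Fin 5, G p (E i) * x5 i := by
    intro p
    show (∑ q, G p q * x q) = _
    rw [hsum5 (fun q => G p q * x q) (fun q hq => by show G p q * x q = 0; rw [hx0 q hq, mul_zero])]
    exact Finset.sum_congr rfl (fun i _ => by rw [hxE i])
  have hQx : Qf G x = Qf G5 x5 := by
    show (∑ p, x p * (G.mulVec x) p) = ∑ i, x5 i * (G5.mulVec x5) i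
    rw [hsum5 (fun p => x p * (G.mulVec x) p)
      (fun p hp => by show x p * (G.mulVec x) p = 0; rw [hx0 p hp, zero_mul])]
    apply Finset.sum_congr rfl
    intro i _
    rw [hxE i, hmv (E i)]
    rfl
  have hxk : IsUnit (x (E k5)) := by
    apply isUnit_of_not_two_dvd
    rw [hxE k5]
    exact hk5
  obtain ⟨U, W, hUW, hUcol⟩ := complete_primitive x hxk (Fin.last m)
  apply primRep_congr hUW
  have hcorner : (Uᵀ * G * U) (Fin.last m) (Fin.last m) = Qf G x :=
    conj_corner G U (Fin.last m) x hUcol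
  have hgood : ¬ (2:ℤ_[2]) ∣ (Uᵀ * G * U) (Fin.last m) (Fin.last m)
      ∨ (8:ℤ_[2]) ∣ (Uᵀ * G * U) (Fin.last m) (Fin.last m) := by
    rw [hcorner, hQx]
    rcases hval with h | h
    · exact Or.inl h
    · exact Or.inr h
  exact construct m (Uᵀ * G * U) (conj_isSymm hG) hgood
end

section
/- It is impossible for three binary improper ℤ₂-lattices ℓ₁, ℓ₂, ℓ₃ to satisfy ℓ₁ ⊥ ℓ₂ ≅ ℓ₁ ⊥ ℓ₃ ≅ ℓ₂ ⊥ ℓ₃ ≅ 𝔸 ⊥ 2𝔸 simultaneously. -/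
/-!
An isometry changes the determinant by the square of a unit, so the 2-adic order of the
determinant is an isometry invariant. It is `2a` for `2^a ℍ` and `2^a 𝔸`, and `2` for `𝔸 ⊥ 2𝔸`.
Writing `aᵢ` for the exponent of `ℓᵢ`, the three isometries would give `aᵢ + aⱼ = 1` for all
`i ≠ j`; summing, `2 (a₁ + a₂ + a₃) = 3`, which is impossible.
-/

open Matrix

/-- Isometry of `ℤ₂`-lattices given by Gram matrices indexed by the same type. -/
def IsomGram {ι : Type*} [Fintype ι] [DecidableEq ι]
    (M N : Matrix ι ι ℤ_[2]) : Prop :=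
  ∃ T : Matrix ι ι ℤ_[2], IsUnit T.det ∧ Tᵀ * M * T = N

/-- A binary `ℤ₂`-lattice is improper (modular) if it is isometric to `2^a ℍ` or `2^a 𝔸`. -/
noncomputable def Improper (ℓ : Matrix (Fin 2) (Fin 2) ℤ_[2]) : Prop :=
  ∃ a : ℕ, IsomGram ((2 ^ a : ℤ_[2]) • !![0, 1; 1, 0]) ℓ ∨
    IsomGram ((2 ^ a : ℤ_[2]) • !![2, 1; 1, 2]) ℓ

/-- The Gram matrix of `𝔸 ⊥ 2𝔸` over `ℤ₂` (indexed by `Fin 2 ⊕ Fin 2`). -/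
noncomputable def A2A : Matrix (Fin 2 ⊕ Fin 2) (Fin 2 ⊕ Fin 2) ℤ_[2] :=
  Matrix.fromBlocks !![2, 1; 1, 2] 0 0 ((2 : ℤ_[2]) • !![2, 1; 1, 2])

lemma IsomGram.norm_det_eq {ι : Type*} [Fintype ι] [DecidableEq ι]
    {M N : Matrix ι ι ℤ_[2]} (h : IsomGram M N) : ‖N.det‖ = ‖M.det‖ := by
  obtain ⟨T, hT, rfl⟩ := h
  rw [det_mul, det_mul, det_transpose, norm_mul, norm_mul, PadicInt.isUnit_iff.mp hT,
    one_mul, mul_one]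

lemma PadicInt.norm_two_eq_inv_two : ‖(2 : ℤ_[2])‖ = 2⁻¹ := by
  exact_mod_cast PadicInt.norm_p (p := 2)

lemma PadicInt.norm_three_eq_one : ‖(3 : ℤ_[2])‖ = 1 := by
  exact_mod_cast PadicInt.norm_natCast_eq_one_iff.mpr (by decide : Nat.Coprime 2 3)

lemma Improper.norm_det {ℓ : Matrix (Fin 2) (Fin 2) ℤ_[2]} (h : Improper ℓ) :
    ∃ a : ℕ, ‖ℓ.det‖ = 4⁻¹ ^ a := by
  obtain ⟨a, h | h⟩ := h <;> refine ⟨a, ?_⟩ <;>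
    rw [h.norm_det_eq, det_smul, det_fin_two_of, Fintype.card_fin, norm_mul, norm_pow,
      norm_pow, PadicInt.norm_two_eq_inv_two, ← pow_mul, pow_mul']
  · norm_num
  · norm_num [PadicInt.norm_three_eq_one]

lemma norm_det_A2A : ‖A2A.det‖ = 4⁻¹ := by
  have hdet : A2A.det = 2 ^ 2 * 3 ^ 2 := by
    rw [A2A, det_fromBlocks_zero₂₁, det_smul, det_fin_two_of]
    norm_num
  rw [hdet, norm_mul, norm_pow, norm_pow, PadicInt.norm_two_eq_inv_two, PadicInt.norm_three_eq_one]
  norm_num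

lemma IsomGram.add_eq_one_of_fromBlocks_A2A {ℓ ℓ' : Matrix (Fin 2) (Fin 2) ℤ_[2]} {a a' : ℕ}
    (ha : ‖ℓ.det‖ = 4⁻¹ ^ a) (ha' : ‖ℓ'.det‖ = 4⁻¹ ^ a')
    (h : IsomGram (fromBlocks ℓ 0 0 ℓ') A2A) : a + a' = 1 := by
  have := h.norm_det_eq
  rw [norm_det_A2A, det_fromBlocks_zero₂₁, norm_mul, ha, ha', ← pow_add] at this
  exact pow_right_injective₀ (a := (4⁻¹ : ℝ)) (by norm_num) (by norm_num)
    (this.symm.trans (pow_one _).symm)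

/-- Three binary improper `ℤ₂`-lattices cannot satisfy
`ℓ₁ ⊥ ℓ₂ ≅ ℓ₁ ⊥ ℓ₃ ≅ ℓ₂ ⊥ ℓ₃ ≅ 𝔸 ⊥ 2𝔸` simultaneously. -/
theorem not_all_pairs_isometric_to_A2A
    (ℓ₁ ℓ₂ ℓ₃ : Matrix (Fin 2) (Fin 2) ℤ_[2])
    (h1 : Improper ℓ₁) (h2 : Improper ℓ₂) (h3 : Improper ℓ₃) :
    ¬ (IsomGram (Matrix.fromBlocks ℓ₁ 0 0 ℓ₂) A2A ∧
        IsomGram (Matrix.fromBlocks ℓ₁ 0 0 ℓ₃) A2A ∧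
        IsomGram (Matrix.fromBlocks ℓ₂ 0 0 ℓ₃) A2A) := by
  rintro ⟨h12, h13, h23⟩
  obtain ⟨a₁, ha₁⟩ := h1.norm_det
  obtain ⟨a₂, ha₂⟩ := h2.norm_det
  obtain ⟨a₃, ha₃⟩ := h3.norm_det
  have e12 := h12.add_eq_one_of_fromBlocks_A2A ha₁ ha₂
  have e13 := h13.add_eq_one_of_fromBlocks_A2A ha₁ ha₃
  have e23 := h23.add_eq_one_of_fromBlocks_A2A ha₂ ha₃
  omega
end

section
/- Let L be a binary ℤ₂-lattice with scale ℤ₂ whose ambient quadratic space over ℚ₂ is hyperbolic, and let s, t be integers with t > 2s = ord₂(dL). If z ∈ L is primitive with ord₂ Q(z) = t+1 and w ∈ L satisfies ord₂ B(z,w) = t, then ord₂ Q(w) ≥ t+2. -/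
open Matrix

/-!
Hyperbolicity gives `dL = -e²`, so the Gram determinant identity reads
`Q(z) Q(w) = B(z,w)² - (e δ)²` with `δ = det(z, w)`. Completing the primitive `z` to a basis
`(z, v)`, the same identity for `(z, v)` and `ord₂ Q(z) > ord₂ dL` force `ord₂ B(z,v) = s`, and
expanding `w` in this basis gives `ord₂ (δ B(z,v)) = ord₂ B(z,w) = t`; hence `ord₂ (e δ) = t`.
Since units of `ℤ₂` square to `1 mod 8`, two elements of valuation `t` have squares congruent
modulo `2^(2t+3)`, so `ord₂ (Q(z) Q(w)) ≥ 2t + 3`.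
-/

namespace Matrix

variable {R : Type*} [CommRing R]

theorem dotProduct_mulVec_mul_dotProduct_mulVec_sub_sq {G : Matrix (Fin 2) (Fin 2) R}
    (hG : G.IsSymm) (x y : Fin 2 → R) :
    (x ⬝ᵥ G *ᵥ x) * (y ⬝ᵥ G *ᵥ y) - (x ⬝ᵥ G *ᵥ y) ^ 2 = G.det * (of ![x, y]).det ^ 2 := by
  have hG10 : G 1 0 = G 0 1 := hG.apply 0 1
  simp only [dotProduct, mulVec, Fin.sum_univ_two, det_fin_two, of_apply, cons_val_zero,
    cons_val_one, hG10]
  ring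

theorem det_of_mul_dotProduct_mulVec (G : Matrix (Fin 2) (Fin 2) R) (u x y v : Fin 2 → R) :
    (of ![x, v]).det * (u ⬝ᵥ G *ᵥ y) =
      (of ![y, v]).det * (u ⬝ᵥ G *ᵥ x) + (of ![x, y]).det * (u ⬝ᵥ G *ᵥ v) := by
  simp only [dotProduct, mulVec, Fin.sum_univ_two, det_fin_two, of_apply, cons_val_zero,
    cons_val_one]
  ring

theorem exists_isUnit_det_of_isUnit {z : Fin 2 → R} (hz : IsUnit (z 0) ∨ IsUnit (z 1)) :
    ∃ v : Fin 2 → R, IsUnit (of ![z, v]).det := by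
  rcases hz with hz | hz
  · exact ⟨![0, 1], by simpa [det_fin_two] using hz⟩
  · exact ⟨![1, 0], by simpa [det_fin_two] using hz.neg⟩

end Matrix

namespace PadicInt

variable {p : ℕ} [Fact p.Prime]

theorem valuation_eq_zero_of_isUnit {u : ℤ_[p]} (hu : IsUnit u) : u.valuation = 0 := by
  obtain ⟨w, hw⟩ := hu.exists_right_inv
  have h := congrArg valuation hw
  rw [valuation_mul hu.ne_zero (right_ne_zero_of_mul_eq_one hw), valuation_one] at h
  omega

theorem valuation_isUnit_mul {u : ℤ_[p]} (hu : IsUnit u) (x : ℤ_[p]) :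
    (u * x).valuation = x.valuation := by
  rcases eq_or_ne x 0 with rfl | hx
  · simp
  · rw [valuation_mul hu.ne_zero hx, valuation_eq_zero_of_isUnit hu, zero_add]

theorem pow_dvd_of_le_valuation {x : ℤ_[p]} {n : ℕ} (h : n ≤ x.valuation) :
    (p : ℤ_[p]) ^ n ∣ x := by
  rcases eq_or_ne x 0 with rfl | hx
  · exact dvd_zero _
  · exact Ideal.mem_span_singleton.mp ((mem_span_pow_iff_le_valuation x hx n).mpr h)

theorem eq_zero_or_le_valuation_add_of_pow_dvd_mul {x y : ℤ_[p]} {n : ℕ} (hx : x ≠ 0)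
    (h : (p : ℤ_[p]) ^ n ∣ x * y) : y = 0 ∨ n ≤ x.valuation + y.valuation := by
  rcases eq_or_ne y 0 with rfl | hy
  · exact Or.inl rfl
  · right
    rw [← valuation_mul hx hy]
    exact (mem_span_pow_iff_le_valuation _ (mul_ne_zero hx hy) n).mp
      (Ideal.mem_span_singleton.mpr h)

theorem valuation_add_of_pow_dvd {x y : ℤ_[p]} (hx : x ≠ 0)
    (hy : (p : ℤ_[p]) ^ (x.valuation + 1) ∣ y) :
    x + y ≠ 0 ∧ (x + y).valuation = x.valuation := by
  obtain ⟨k, rfl⟩ := hy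
  set u := unitCoeff hx
  have hunit : IsUnit ((u : ℤ_[p]) + p * k) := by
    have hpk : ‖(p : ℤ_[p]) * k‖ < 1 := (norm_lt_one_iff_dvd _).mpr (dvd_mul_right _ _)
    rw [isUnit_iff, norm_add_eq_max_of_ne (by rw [norm_units]; exact hpk.ne'), norm_units]
    exact max_eq_left hpk.le
  have hsplit : x + (p : ℤ_[p]) ^ (x.valuation + 1) * k =
      (p : ℤ_[p]) ^ x.valuation * ((u : ℤ_[p]) + p * k) := by
    rw [pow_succ]
    linear_combination unitCoeff_spec hx
  rw [hsplit, valuation_p_pow_mul _ _ hunit.ne_zero, valuation_eq_zero_of_isUnit hunit]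
  exact ⟨mul_ne_zero (pow_ne_zero _ (NeZero.ne _)) hunit.ne_zero, add_zero _⟩

theorem exists_det_eq_neg_sq (G : Matrix (Fin 2) (Fin 2) ℤ_[p])
    (T : Matrix (Fin 2) (Fin 2) ℚ_[p])
    (hT : Tᵀ * G.map (fun x => (x : ℚ_[p])) * T = !![0, 1; 1, 0]) :
    ∃ e : ℤ_[p], e ≠ 0 ∧ G.det = -e ^ 2 := by
  have hdetT : (G.det : ℚ_[p]) * T.det ^ 2 = -1 := by
    have hmap : (G.map (fun x => (x : ℚ_[p]))).det = G.det :=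
      (RingHom.map_det Coe.ringHom G).symm
    have h := congrArg det hT
    rw [det_mul, det_mul, det_transpose, det_fin_two_of, hmap] at h
    linear_combination h
  have hT0 : T.det ≠ 0 := by
    intro h
    rw [h] at hdetT
    norm_num at hdetT
  have hf : (G.det : ℚ_[p]) = -(T.det⁻¹) ^ 2 := by
    field_simp
    linear_combination hdetT
  have hnorm : ‖T.det⁻¹‖ ≤ 1 := by
    have hsq : ‖T.det⁻¹‖ ^ 2 ≤ 1 := by
      rw [← norm_pow, ← norm_neg, ← hf]
      exact G.det.2
    exact (pow_le_one_iff_of_nonneg (norm_nonneg _) two_ne_zero).mp hsq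
  refine ⟨⟨T.det⁻¹, hnorm⟩, fun h => inv_ne_zero hT0 (congrArg Subtype.val h), ?_⟩
  exact Subtype.ext hf

theorem two_dvd_or_two_dvd_sub_one (x : ℤ_[2]) : 2 ∣ x ∨ 2 ∣ x - 1 := by
  obtain ⟨n, hn, hx⟩ := exists_mem_range x
  rw [maximalIdeal_eq_span_p, Ideal.mem_span_singleton, Nat.cast_ofNat] at hx
  interval_cases n
  · left; simpa using hx
  · right; simpa using hx

theorem two_pow_three_dvd_sq_sub_one {u : ℤ_[2]} (hu : IsUnit u) : 2 ^ 3 ∣ u ^ 2 - 1 := by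
  have hodd : 2 ∣ u - 1 := (two_dvd_or_two_dvd_sub_one u).resolve_left fun h2 =>
    by simpa using mem_nonunits_iff.mp p_nonunit (isUnit_of_dvd_unit h2 hu)
  obtain ⟨a, ha⟩ := hodd
  rcases two_dvd_or_two_dvd_sub_one a with ⟨b, hb⟩ | ⟨b, hb⟩
  · exact ⟨2 * b ^ 2 + b, by linear_combination (u + 1 + 2 * a) * ha + (4 * a + 8 * b + 4) * hb⟩
  · exact ⟨2 * b ^ 2 + 3 * b + 1,
      by linear_combination (u + 1 + 2 * a) * ha + (4 * a + 8 * b + 8) * hb⟩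

theorem two_pow_dvd_sq_sub_sq {x y : ℤ_[2]} (hx : x ≠ 0) (hy : y ≠ 0)
    (h : x.valuation = y.valuation) : 2 ^ (2 * x.valuation + 3) ∣ x ^ 2 - y ^ 2 := by
  have hx' := unitCoeff_spec hx
  have hy' := unitCoeff_spec hy
  rw [← h, Nat.cast_ofNat] at hy'
  rw [Nat.cast_ofNat] at hx'
  obtain ⟨a, ha⟩ := two_pow_three_dvd_sq_sub_one (unitCoeff hx).isUnit
  obtain ⟨b, hb⟩ := two_pow_three_dvd_sq_sub_one (unitCoeff hy).isUnit
  refine ⟨a - b, ?_⟩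
  linear_combination (x + unitCoeff hx * 2 ^ x.valuation) * hx' -
    (y + unitCoeff hy * 2 ^ x.valuation) * hy' + (2 ^ x.valuation) ^ 2 * (ha - hb)

section BinaryLattice

variable {G : Matrix (Fin 2) (Fin 2) ℤ_[p]} {z v : Fin 2 → ℤ_[p]}

theorem two_mul_valuation_dotProduct_mulVec_eq_valuation_det (hG : G.IsSymm) (hdet : G.det ≠ 0)
    (hv : IsUnit (of ![z, v]).det) (hQ : (p : ℤ_[p]) ^ (G.det.valuation + 1) ∣ z ⬝ᵥ G *ᵥ z) :
    z ⬝ᵥ G *ᵥ v ≠ 0 ∧ 2 * (z ⬝ᵥ G *ᵥ v).valuation = G.det.valuation := by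
  have hsq : (z ⬝ᵥ G *ᵥ v) ^ 2 =
      -(of ![z, v]).det ^ 2 * G.det + (z ⬝ᵥ G *ᵥ z) * (v ⬝ᵥ G *ᵥ v) := by
    linear_combination -(dotProduct_mulVec_mul_dotProduct_mulVec_sub_sq hG z v)
  have hunit : IsUnit (-(of ![z, v]).det ^ 2) := (hv.pow 2).neg
  have hval := valuation_isUnit_mul hunit G.det
  obtain ⟨hne, heq⟩ := valuation_add_of_pow_dvd (mul_ne_zero hunit.ne_zero hdet)
    (hval ▸ dvd_mul_of_dvd_left hQ _)
  rw [← hsq] at hne heq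
  rw [valuation_pow, hval] at heq
  exact ⟨ne_zero_pow two_ne_zero hne, heq⟩

theorem valuation_det_of_mul_dotProduct_mulVec {w : Fin 2 → ℤ_[p]} (hB : z ⬝ᵥ G *ᵥ w ≠ 0)
    (hv : IsUnit (of ![z, v]).det)
    (hQ : (p : ℤ_[p]) ^ ((z ⬝ᵥ G *ᵥ w).valuation + 1) ∣ z ⬝ᵥ G *ᵥ z) :
    (of ![z, w]).det * (z ⬝ᵥ G *ᵥ v) ≠ 0 ∧
      ((of ![z, w]).det * (z ⬝ᵥ G *ᵥ v)).valuation = (z ⬝ᵥ G *ᵥ w).valuation := by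
  have hlin : (of ![z, w]).det * (z ⬝ᵥ G *ᵥ v) =
      (of ![z, v]).det * (z ⬝ᵥ G *ᵥ w) + -(of ![w, v]).det * (z ⬝ᵥ G *ᵥ z) := by
    linear_combination -(det_of_mul_dotProduct_mulVec G z z w v)
  have hval := valuation_isUnit_mul hv (z ⬝ᵥ G *ᵥ w)
  rw [hlin, ← hval]
  exact valuation_add_of_pow_dvd (mul_ne_zero hv.ne_zero hB) (hval ▸ dvd_mul_of_dvd_right hQ _)

end BinaryLattice

end PadicInt

theorem valuation_Q_w_ge_general
    (G : Matrix (Fin 2) (Fin 2) ℤ_[2]) (hsymm : G.IsSymm)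
    (hhyp : ∃ T : Matrix (Fin 2) (Fin 2) ℚ_[2], IsUnit T.det ∧
      Tᵀ * G.map (fun x => (x : ℚ_[2])) * T = !![0, 1; 1, 0])
    (s t : ℤ) (hst : 2 * s = G.det.valuation) (hts : 2 * s < t)
    (z w : Fin 2 → ℤ_[2]) (hz : IsUnit (z 0) ∨ IsUnit (z 1))
    (hQz : (z ⬝ᵥ G.mulVec z).valuation = t + 1)
    (hBzw : (z ⬝ᵥ G.mulVec w).valuation = t) :
    w ⬝ᵥ G.mulVec w = 0 ∨ t + 2 ≤ (w ⬝ᵥ G.mulVec w).valuation := by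
  obtain ⟨T, -, hT⟩ := hhyp
  obtain ⟨e, he0, hdet⟩ := PadicInt.exists_det_eq_neg_sq G T hT
  obtain ⟨v, hv⟩ := exists_isUnit_det_of_isUnit hz
  have hQz0 : z ⬝ᵥ G *ᵥ z ≠ 0 := fun h => by rw [h, PadicInt.valuation_zero] at hQz; omega
  have hB0 : z ⬝ᵥ G *ᵥ w ≠ 0 := fun h => by rw [h, PadicInt.valuation_zero] at hBzw; omega
  have hve : 2 * e.valuation = G.det.valuation := by
    rw [hdet, neg_eq_neg_one_mul, PadicInt.valuation_isUnit_mul isUnit_one.neg,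
      PadicInt.valuation_pow]
  obtain ⟨-, hvb⟩ := PadicInt.two_mul_valuation_dotProduct_mulVec_eq_valuation_det (v := v) hsymm
    (hdet ▸ neg_ne_zero.mpr (pow_ne_zero 2 he0)) hv (PadicInt.pow_dvd_of_le_valuation (by omega))
  obtain ⟨hdb0, hdb⟩ := PadicInt.valuation_det_of_mul_dotProduct_mulVec hB0 hv
    (PadicInt.pow_dvd_of_le_valuation (by omega))
  have hδ0 := left_ne_zero_of_mul hdb0
  have hc : (e * (of ![z, w]).det).valuation = (z ⬝ᵥ G *ᵥ w).valuation := by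
    rw [PadicInt.valuation_mul he0 hδ0, ← hdb,
      PadicInt.valuation_mul hδ0 (right_ne_zero_of_mul hdb0)]
    omega
  have hkey : (z ⬝ᵥ G *ᵥ z) * (w ⬝ᵥ G *ᵥ w) =
      (z ⬝ᵥ G *ᵥ w) ^ 2 - (e * (of ![z, w]).det) ^ 2 := by
    linear_combination dotProduct_mulVec_mul_dotProduct_mulVec_sub_sq hsymm z w +
      (of ![z, w]).det ^ 2 * hdet
  have h8 := PadicInt.two_pow_dvd_sq_sub_sq hB0 (mul_ne_zero he0 hδ0) hc.symm
  rw [← hkey] at h8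
  refine (PadicInt.eq_zero_or_le_valuation_add_of_pow_dvd_mul (n := 2 * _ + 3) hQz0
    (by rwa [Nat.cast_ofNat])).imp_right fun h => ?_
  omega

/-- Let `L` be a binary `ℤ₂`-lattice with scale `ℤ₂` (some entry of the Gram matrix `G` is a
unit) whose ambient `ℚ₂`-space is hyperbolic.  Let `s, t` be integers with `t > 2s = ord₂(dL)`.
If `z ∈ L` is primitive with `ord₂ Q(z) = t + 1` and `w ∈ L` satisfies `ord₂ B(z,w) = t`, then
`ord₂ Q(w) ≥ t + 2`. -/
theorem valuation_Q_w_ge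
    (G : Matrix (Fin 2) (Fin 2) ℤ_[2]) (hsymm : G.IsSymm) (hdet : G.det ≠ 0)
    (hscale : ∃ i j, IsUnit (G i j))
    (hhyp : ∃ T : Matrix (Fin 2) (Fin 2) ℚ_[2], IsUnit T.det ∧
      Tᵀ * G.map (fun x => (x : ℚ_[2])) * T = !![0, 1; 1, 0])
    (s t : ℤ) (hst : 2 * s = G.det.valuation) (hts : 2 * s < t)
    (z w : Fin 2 → ℤ_[2]) (hz : IsUnit (z 0) ∨ IsUnit (z 1))
    (hQz : (z ⬝ᵥ G.mulVec z).valuation = t + 1)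
    (hBzw : (z ⬝ᵥ G.mulVec w).valuation = t) :
    w ⬝ᵥ G.mulVec w = 0 ∨ t + 2 ≤ (w ⬝ᵥ G.mulVec w).valuation :=
  valuation_Q_w_ge_general G hsymm hhyp s t hst hts z w hz hQz hBzw
end
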